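/- arXiv:math/9911153 — 4 statements merged into one kernel-verified Lean document; each statement's English description precedes it below -/
import Mathlib

section
/- Under the hypotheses of the operator van der Corput lemma — χ supported in a rectangle R = I × J with side lengths δ_x, δ_y; |∂_y^n χ| ≤ C/δ_y^n on R for n = 0, 1, 2; |S''_{xy}| ≥ μ > 0 on R; |∂_y^n S''_{xy}| ≤ C μ/δ_y^n on R for n = 1, 2 — the kernel K(x₁,x₂) = ∫ e^{iλ[S(x₁,y) − S(x₂,y)]} χ(x₁,y) \overline{χ(x₂,y)} dy of the composition T T* satisfies the pointwise bound |K(x₁,x₂)| ≤ C' · δ_y / (1 + λ² μ² δ_y² |x₁ − x₂|²) for all x₁, x₂, with C' depending only on C. -/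
open MeasureTheory Set

/-- The mixed second partial derivative `S''_{xy} = ∂²S/∂x∂y`. -/
noncomputable def mixedPartial (S : ℝ → ℝ → ℝ) : ℝ → ℝ → ℝ :=
  fun x y => deriv (fun x' => deriv (fun y' => S x' y') y) x

noncomputable def pdx (F : ℝ × ℝ → ℝ) : ℝ × ℝ → ℝ := fun p => fderiv ℝ F p (1, 0)
noncomputable def pdy (F : ℝ × ℝ → ℝ) : ℝ × ℝ → ℝ := fun p => fderiv ℝ F p (0, 1)

theorem contDiffOn_pdy {O : Set (ℝ × ℝ)} {F : ℝ × ℝ → ℝ} (hO : IsOpen O)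
    (hF : ContDiffOn ℝ (⊤ : ℕ∞) F O) : ContDiffOn ℝ (⊤ : ℕ∞) (pdy F) O := by
  have h1 : ContDiffOn ℝ (⊤ : ℕ∞) (fderiv ℝ F) O := hF.fderiv_of_isOpen hO le_rfl
  exact h1.clm_apply contDiffOn_const

theorem contDiffOn_pdx {O : Set (ℝ × ℝ)} {F : ℝ × ℝ → ℝ} (hO : IsOpen O)
    (hF : ContDiffOn ℝ (⊤ : ℕ∞) F O) : ContDiffOn ℝ (⊤ : ℕ∞) (pdx F) O := by
  have h1 : ContDiffOn ℝ (⊤ : ℕ∞) (fderiv ℝ F) O := hF.fderiv_of_isOpen hO le_rfl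
  exact h1.clm_apply contDiffOn_const

theorem hasDerivAt_pdy {O : Set (ℝ × ℝ)} {F : ℝ × ℝ → ℝ} (hO : IsOpen O)
    (hF : ContDiffOn ℝ (⊤ : ℕ∞) F O) {x y : ℝ}
    (hp : (x, y) ∈ O) : HasDerivAt (fun y' => F (x, y')) (pdy F (x, y)) y := by
  have hdiff : DifferentiableAt ℝ F (x, y) :=
    (hF.differentiableOn (by simp)).differentiableAt (hO.mem_nhds hp)
  have hline : HasDerivAt (fun y' : ℝ => ((x, y') : ℝ × ℝ)) ((0 : ℝ), (1 : ℝ)) y :=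
    (hasDerivAt_const y x).prodMk (hasDerivAt_id y)
  exact hdiff.hasFDerivAt.comp_hasDerivAt y hline

theorem hasDerivAt_pdx {O : Set (ℝ × ℝ)} {F : ℝ × ℝ → ℝ} (hO : IsOpen O)
    (hF : ContDiffOn ℝ (⊤ : ℕ∞) F O) {x y : ℝ}
    (hp : (x, y) ∈ O) : HasDerivAt (fun x' => F (x', y)) (pdx F (x, y)) x := by
  have hdiff : DifferentiableAt ℝ F (x, y) :=
    (hF.differentiableOn (by simp)).differentiableAt (hO.mem_nhds hp)
  have hline : HasDerivAt (fun x' : ℝ => ((x', y) : ℝ × ℝ)) ((1 : ℝ), (0 : ℝ)) x :=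
    (hasDerivAt_id x).prodMk (hasDerivAt_const x y)
  exact hdiff.hasFDerivAt.comp_hasDerivAt x hline

theorem schwarz {O : Set (ℝ × ℝ)} {F : ℝ × ℝ → ℝ} (hO : IsOpen O)
    (hF : ContDiffOn ℝ (⊤ : ℕ∞) F O) {p : ℝ × ℝ} (hp : p ∈ O) :
    pdx (pdy F) p = pdy (pdx F) p := by
  have hfd : ContDiffOn ℝ (⊤ : ℕ∞) (fderiv ℝ F) O := hF.fderiv_of_isOpen hO le_rfl
  have hdF : DifferentiableOn ℝ F O := hF.differentiableOn (by simp)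
  have hdfd : DifferentiableOn ℝ (fderiv ℝ F) O := hfd.differentiableOn (by simp)
  set f'' := fderiv ℝ (fderiv ℝ F) p with hf''
  have h2 : HasFDerivAt (fderiv ℝ F) f'' p :=
    (hdfd.differentiableAt (hO.mem_nhds hp)).hasFDerivAt
  have h1 : ∀ᶠ q in nhds p, HasFDerivAt F (fderiv ℝ F q) q := by
    filter_upwards [hO.mem_nhds hp] with q hq
    exact (hdF.differentiableAt (hO.mem_nhds hq)).hasFDerivAt
  have hsymm := second_derivative_symmetric_of_eventually h1 h2 (1, 0) (0, 1)
  have hx : HasFDerivAt (pdy F)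
      ((ContinuousLinearMap.apply ℝ ℝ ((0 : ℝ), (1 : ℝ))).comp f'') p :=
    (ContinuousLinearMap.apply ℝ ℝ ((0 : ℝ), (1 : ℝ))).hasFDerivAt.comp p h2
  have hy : HasFDerivAt (pdx F)
      ((ContinuousLinearMap.apply ℝ ℝ ((1 : ℝ), (0 : ℝ))).comp f'') p :=
    (ContinuousLinearMap.apply ℝ ℝ ((1 : ℝ), (0 : ℝ))).hasFDerivAt.comp p h2
  have e1 : pdx (pdy F) p = f'' (1, 0) (0, 1) := by
    show fderiv ℝ (pdy F) p (1, 0) = _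
    rw [hx.fderiv]; rfl
  have e2 : pdy (pdx F) p = f'' (0, 1) (1, 0) := by
    show fderiv ℝ (pdx F) p (0, 1) = _
    rw [hy.fderiv]; rfl
  rw [e1, e2, hsymm]

theorem mvt_between {F F' : ℝ → ℝ} {x₁ x₂ : ℝ} (hne : x₁ ≠ x₂)
    (hd : ∀ x ∈ Icc (min x₁ x₂) (max x₁ x₂), HasDerivAt F (F' x) x) :
    ∃ c ∈ Icc (min x₁ x₂) (max x₁ x₂), F x₁ - F x₂ = F' c * (x₁ - x₂) := by
  rcases lt_or_gt_of_ne hne with h | h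
  · have hmin : min x₁ x₂ = x₁ := min_eq_left h.le
    have hmax : max x₁ x₂ = x₂ := max_eq_right h.le
    rw [hmin, hmax] at hd ⊢
    have hc : ContinuousOn F (Icc x₁ x₂) := fun x hx => (hd x hx).continuousAt.continuousWithinAt
    obtain ⟨c, hc1, hc2⟩ := exists_hasDerivAt_eq_slope F F' h hc
      (fun x hx => hd x (Ioo_subset_Icc_self hx))
    refine ⟨c, Ioo_subset_Icc_self hc1, ?_⟩
    have h0 : x₂ - x₁ ≠ 0 := sub_ne_zero.mpr hne.symm
    rw [hc2, div_mul_eq_mul_div, eq_div_iff h0]; ring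
  · have hmin : min x₁ x₂ = x₂ := min_eq_right h.le
    have hmax : max x₁ x₂ = x₁ := max_eq_left h.le
    rw [hmin, hmax] at hd ⊢
    have hc : ContinuousOn F (Icc x₂ x₁) := fun x hx => (hd x hx).continuousAt.continuousWithinAt
    obtain ⟨c, hc1, hc2⟩ := exists_hasDerivAt_eq_slope F F' h hc
      (fun x hx => hd x (Ioo_subset_Icc_self hx))
    refine ⟨c, Ioo_subset_Icc_self hc1, ?_⟩
    have h0 : x₁ - x₂ ≠ 0 := sub_ne_zero.mpr hne
    rw [hc2, div_mul_eq_mul_div, eq_div_iff h0]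

theorem zero_on_Iio {f : ℝ → ℂ} (hf : Continuous f) {a : ℝ}
    (h : ∀ y, y < a → f y = 0) : f a = 0 := by
  have h1 : Filter.Tendsto f (nhdsWithin a (Iio a)) (nhds (f a)) :=
    (hf.continuousAt).continuousWithinAt.tendsto
  have h2 : Filter.Tendsto f (nhdsWithin a (Iio a)) (nhds 0) := by
    apply Filter.Tendsto.congr' _ tendsto_const_nhds
    filter_upwards [self_mem_nhdsWithin] with y hy
    exact (h y hy).symm
  exact tendsto_nhds_unique h1 h2

theorem zero_on_Ioi {f : ℝ → ℂ} (hf : Continuous f) {a : ℝ}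
    (h : ∀ y, a < y → f y = 0) : f a = 0 := by
  have h1 : Filter.Tendsto f (nhdsWithin a (Ioi a)) (nhds (f a)) :=
    (hf.continuousAt).continuousWithinAt.tendsto
  have h2 : Filter.Tendsto f (nhdsWithin a (Ioi a)) (nhds 0) := by
    apply Filter.Tendsto.congr' _ tendsto_const_nhds
    filter_upwards [self_mem_nhdsWithin] with y hy
    exact (h y hy).symm
  exact tendsto_nhds_unique h1 h2

theorem deriv_zero_on_Iio {f : ℝ → ℂ} (hf : ContDiff ℝ (⊤ : ℕ∞) f) {a : ℝ}
    (h : ∀ y, y < a → f y = 0) : deriv f a = 0 := by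
  apply zero_on_Iio (hf.continuous_deriv (by exact_mod_cast le_top))
  intro y hy
  have : f =ᶠ[nhds y] (fun _ => 0) := by
    filter_upwards [Iio_mem_nhds hy] with z hz
    exact h z hz
  rw [this.deriv_eq, deriv_const]

theorem deriv_zero_on_Ioi {f : ℝ → ℂ} (hf : ContDiff ℝ (⊤ : ℕ∞) f) {a : ℝ}
    (h : ∀ y, a < y → f y = 0) : deriv f a = 0 := by
  apply zero_on_Ioi (hf.continuous_deriv (by exact_mod_cast le_top))
  intro y hy
  have : f =ᶠ[nhds y] (fun _ => 0) := by
    filter_upwards [Ioi_mem_nhds hy] with z hz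
    exact h z hz
  rw [this.deriv_eq, deriv_const]

theorem hasDerivAt_E {lam : ℝ} {Φ : ℝ → ℝ} {φy : ℝ} {y : ℝ}
    (hΦ : HasDerivAt Φ φy y) :
    HasDerivAt (fun t => Complex.exp (Complex.I * lam * (Φ t : ℂ)))
      (Complex.I * lam * φy * Complex.exp (Complex.I * lam * (Φ y : ℂ))) y := by
  have h1 : HasDerivAt (fun t => ((Φ t : ℂ))) (φy : ℂ) y := hΦ.ofReal_comp
  have h2 : HasDerivAt (fun t => Complex.I * lam * (Φ t : ℂ)) (Complex.I * lam * φy) y :=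
    h1.const_mul _
  simpa [mul_comm] using h2.cexp

theorem step (a b lam : ℝ) (Φ φ : ℝ → ℝ) (u u' : ℝ → ℂ)
    (hΦ : ∀ y ∈ uIcc a b, HasDerivAt Φ (φ y) y)
    (hu : ∀ y ∈ uIcc a b, HasDerivAt u (u' y) y)
    (hφc : ContinuousOn φ (uIcc a b))
    (hu'c : ContinuousOn u' (uIcc a b))
    (ha : u a = 0) (hb : u b = 0) :
    ∫ y in a..b, Complex.exp (Complex.I * lam * (Φ y : ℂ)) * (Complex.I * lam * φ y * u y)
      = - ∫ y in a..b, Complex.exp (Complex.I * lam * (Φ y : ℂ)) * u' y := by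
  set E : ℝ → ℂ := fun t => Complex.exp (Complex.I * lam * (Φ t : ℂ)) with hE
  have hEc : ContinuousOn E (uIcc a b) := by
    apply Complex.continuous_exp.comp_continuousOn
    exact (continuous_const.continuousOn.mul
      ((Complex.continuous_ofReal.comp_continuousOn
        (fun y hy => (hΦ y hy).continuousAt.continuousWithinAt))))
  have huc : ContinuousOn u (uIcc a b) := fun y hy => (hu y hy).continuousAt.continuousWithinAt
  have hF : ∀ y ∈ uIcc a b, HasDerivAt (fun t => E t * u t)
      (Complex.I * lam * φ y * E y * u y + E y * u' y) y := by
    intro y hy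
    have h1 := hasDerivAt_E (lam := lam) (hΦ y hy)
    exact h1.mul (hu y hy)
  have hint1 : IntervalIntegrable (fun y => Complex.I * lam * φ y * E y * u y) volume a b := by
    apply ContinuousOn.intervalIntegrable
    exact ((continuous_const.continuousOn.mul
        (Complex.continuous_ofReal.comp_continuousOn hφc)).mul hEc).mul huc
  have hint2 : IntervalIntegrable (fun y => E y * u' y) volume a b :=
    (hEc.mul hu'c).intervalIntegrable
  have key := intervalIntegral.integral_eq_sub_of_hasDerivAt hF (hint1.add hint2)
  rw [hb, ha] at key
  simp only [mul_zero, sub_zero] at key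
  rw [intervalIntegral.integral_add hint1 hint2] at key
  have e1 : ∫ y in a..b, E y * (Complex.I * lam * φ y * u y)
      = ∫ y in a..b, Complex.I * lam * φ y * E y * u y := by
    apply intervalIntegral.integral_congr
    intro y _; ring
  rw [e1]
  have e2 : (∫ (x : ℝ) in a..b, E x * u' x)
      = ∫ (y : ℝ) in a..b, Complex.exp (Complex.I * ↑lam * ↑(Φ y)) * u' y := rfl
  rw [← e2]
  linear_combination key

theorem div_norm_le {p q : ℂ} {pB m : ℝ} (hp : ‖p‖ ≤ pB) (hm : 0 < m) (hq : m ≤ ‖q‖) :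
    ‖p / q‖ ≤ pB / m := by
  rw [norm_div]
  exact div_le_div₀ (le_trans (norm_nonneg p) hp) hp hm hq
set_option maxHeartbeats 2000000 in
/-- under the hypotheses of the operator van der Corput lemma, the
kernel `K(x₁,x₂) = ∫ e^{iλ[S(x₁,y)-S(x₂,y)]} χ(x₁,y) conj(χ(x₂,y)) dy` of `T T*`
satisfies `|K(x₁,x₂)| ≤ C' δy / (1 + λ²μ²δy²|x₁-x₂|²)` with `C'` depending only
on `C`. -/
theorem statement7 (C : ℝ) (hC : 0 < C) :
    ∃ C' : ℝ, 0 < C' ∧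
      ∀ (S : ℝ → ℝ → ℝ) (χ : ℝ → ℝ → ℂ) (O : Set (ℝ × ℝ))
        (lam μ δx δy x₀ y₀ : ℝ),
        0 < lam → 0 < μ → 0 < δx → 0 < δy →
        IsOpen O → Icc x₀ (x₀ + δx) ×ˢ Icc y₀ (y₀ + δy) ⊆ O →
        ContDiffOn ℝ (⊤ : ℕ∞) (fun p : ℝ × ℝ => S p.1 p.2) O →
        ContDiff ℝ (⊤ : ℕ∞) (fun p : ℝ × ℝ => χ p.1 p.2) →
        (Function.support (fun p : ℝ × ℝ => χ p.1 p.2)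
          ⊆ Icc x₀ (x₀ + δx) ×ˢ Icc y₀ (y₀ + δy)) →
        (∀ n : ℕ, n ≤ 2 → ∀ x ∈ Icc x₀ (x₀ + δx), ∀ y ∈ Icc y₀ (y₀ + δy),
          ‖iteratedDeriv n (fun y' => χ x y') y‖ ≤ C / δy ^ n) →
        (∀ x ∈ Icc x₀ (x₀ + δx), ∀ y ∈ Icc y₀ (y₀ + δy),
          μ ≤ |mixedPartial S x y|) →
        (∀ n : ℕ, 1 ≤ n → n ≤ 2 → ∀ x ∈ Icc x₀ (x₀ + δx), ∀ y ∈ Icc y₀ (y₀ + δy),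
          |iteratedDeriv n (fun y' => mixedPartial S x y') y| ≤ C * μ / δy ^ n) →
        ∀ x₁ x₂ : ℝ,
          ‖∫ y : ℝ, Complex.exp (Complex.I * lam * (S x₁ y - S x₂ y)) *
              χ x₁ y * (starRingEnd ℂ) (χ x₂ y)‖
            ≤ C' * δy / (1 + lam ^ 2 * μ ^ 2 * δy ^ 2 * (x₁ - x₂) ^ 2) := by
  refine ⟨2 * (4 * C ^ 2 + 7 * C ^ 3 + 3 * C ^ 4) + 2 * C ^ 2 + 1, by positivity, ?_⟩
  set C' : ℝ := 2 * (4 * C ^ 2 + 7 * C ^ 3 + 3 * C ^ 4) + 2 * C ^ 2 + 1 with hC'def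
  intro S χ O lam μ δx δy x₀ y₀ hlam hμ hδx hδy hO hRO hS hχ hsupp hbnd hm hd x₁ x₂
  have hC' : 0 < C' := by positivity
  set a := y₀ with ha_def
  set b := y₀ + δy with hb_def
  have hab : a ≤ b := by simp [ha_def, hb_def]; linarith
  set J : Set ℝ := Icc a b with hJ_def
  set I : Set ℝ := Icc x₀ (x₀ + δx) with hI_def
  have hden : (0:ℝ) < 1 + lam ^ 2 * μ ^ 2 * δy ^ 2 * (x₁ - x₂) ^ 2 := by positivity
  -- vanishing of χ off the rectangle, in each variable
  have hvan : ∀ x y, (x, y) ∉ I ×ˢ J → χ x y = 0 := by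
    intro x y hxy
    by_contra hne
    exact hxy (hsupp (by simpa [Function.support] using hne))
  by_cases h₁ : ∀ y, χ x₁ y = 0
  · simp only [h₁, mul_zero, zero_mul, map_zero, integral_zero, norm_zero]
    positivity
  by_cases h₂ : ∀ y, χ x₂ y = 0
  · simp only [h₂, mul_zero, zero_mul, map_zero, mul_zero, integral_zero, norm_zero]
    positivity
  push_neg at h₁ h₂
  obtain ⟨ya, hya⟩ := h₁
  obtain ⟨yb, hyb⟩ := h₂
  have hx₁I : x₁ ∈ I := by
    have : ((x₁, ya) : ℝ × ℝ) ∈ I ×ˢ J := hsupp (by simp [Function.support, hya])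
    exact this.1
  have hx₂I : x₂ ∈ I := by
    have : ((x₂, yb) : ℝ × ℝ) ∈ I ×ˢ J := hsupp (by simp [Function.support, hyb])
    exact this.1
  -- the cut-offs in the second variable
  set χ₁ : ℝ → ℂ := fun y => χ x₁ y with hχ₁_def
  set χ₂ : ℝ → ℂ := fun y => χ x₂ y with hχ₂_def
  have hχ₁s : ContDiff ℝ (⊤ : ℕ∞) χ₁ := by
    have : ContDiff ℝ (⊤ : ℕ∞) (fun p : ℝ × ℝ => χ p.1 p.2) := hχ.of_le (by simp)
    exact this.comp ((contDiff_const).prodMk contDiff_id)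
  have hχ₂s : ContDiff ℝ (⊤ : ℕ∞) χ₂ := by
    have : ContDiff ℝ (⊤ : ℕ∞) (fun p : ℝ × ℝ => χ p.1 p.2) := hχ.of_le (by simp)
    exact this.comp ((contDiff_const).prodMk contDiff_id)
  have hχ₁J : ∀ y, y ∉ J → χ₁ y = 0 := fun y hy => hvan x₁ y (fun hmem => hy hmem.2)
  have hχ₂J : ∀ y, y ∉ J → χ₂ y = 0 := fun y hy => hvan x₂ y (fun hmem => hy hmem.2)
  -- differentiability of cut-offs
  have hχ₁' : ∀ y, HasDerivAt χ₁ (deriv χ₁ y) y :=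
    fun y => (hχ₁s.differentiable (by simp) y).hasDerivAt
  have hχ₂' : ∀ y, HasDerivAt χ₂ (deriv χ₂ y) y :=
    fun y => (hχ₂s.differentiable (by simp) y).hasDerivAt
  have hχ₁ds : ContDiff ℝ (⊤ : ℕ∞) (deriv χ₁) := (contDiff_infty_iff_deriv.mp hχ₁s).2
  have hχ₂ds : ContDiff ℝ (⊤ : ℕ∞) (deriv χ₂) := (contDiff_infty_iff_deriv.mp hχ₂s).2
  have hχ₁'' : ∀ y, HasDerivAt (deriv χ₁) (deriv (deriv χ₁) y) y :=
    fun y => (hχ₁ds.differentiable (by simp) y).hasDerivAt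
  have hχ₂'' : ∀ y, HasDerivAt (deriv χ₂) (deriv (deriv χ₂) y) y :=
    fun y => (hχ₂ds.differentiable (by simp) y).hasDerivAt
  have hc₂' : ∀ y, HasDerivAt (fun t => (starRingEnd ℂ) (χ₂ t))
      ((starRingEnd ℂ) (deriv χ₂ y)) y :=
    fun y => (hχ₂' y).star
  have hc₂'' : ∀ y, HasDerivAt (fun t => (starRingEnd ℂ) (deriv χ₂ t))
      ((starRingEnd ℂ) (deriv (deriv χ₂) y)) y :=
    fun y => (hχ₂'' y).star
  -- amplitude g and its derivatives
  set g : ℝ → ℂ := fun y => χ₁ y * (starRingEnd ℂ) (χ₂ y) with hg_def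
  set d1 : ℝ → ℂ := fun y =>
    deriv χ₁ y * (starRingEnd ℂ) (χ₂ y) + χ₁ y * (starRingEnd ℂ) (deriv χ₂ y) with hd1_def
  set d2 : ℝ → ℂ := fun y =>
    (deriv (deriv χ₁) y * (starRingEnd ℂ) (χ₂ y) + deriv χ₁ y * (starRingEnd ℂ) (deriv χ₂ y)) +
    (deriv χ₁ y * (starRingEnd ℂ) (deriv χ₂ y) + χ₁ y * (starRingEnd ℂ) (deriv (deriv χ₂) y))
    with hd2_def
  have hgd : ∀ y, HasDerivAt g (d1 y) y := fun y => ((hχ₁' y).mul (hc₂' y))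
  have hd1d : ∀ y, HasDerivAt d1 (d2 y) y :=
    fun y => ((hχ₁'' y).mul (hc₂' y)).add ((hχ₁' y).mul (hc₂'' y))
  -- endpoint vanishing
  have hnotJ_lt : ∀ y, y < a → y ∉ J := by
    intro y hy hmem
    rw [hJ_def, Set.mem_Icc] at hmem
    linarith [hmem.1]
  have hnotJ_gt : ∀ y, b < y → y ∉ J := by
    intro y hy hmem
    rw [hJ_def, Set.mem_Icc] at hmem
    linarith [hmem.2]
  have hχ₁a : χ₁ a = 0 := zero_on_Iio hχ₁s.continuous (fun y hy => hχ₁J y (hnotJ_lt y hy))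
  have hχ₁b : χ₁ b = 0 := zero_on_Ioi hχ₁s.continuous (fun y hy => hχ₁J y (hnotJ_gt y hy))
  have hdχ₁a : deriv χ₁ a = 0 := deriv_zero_on_Iio hχ₁s (fun y hy => hχ₁J y (hnotJ_lt y hy))
  have hdχ₁b : deriv χ₁ b = 0 := deriv_zero_on_Ioi hχ₁s (fun y hy => hχ₁J y (hnotJ_gt y hy))
  have hga : g a = 0 := by simp [hg_def, hχ₁a]
  have hgb : g b = 0 := by simp [hg_def, hχ₁b]
  have hd1a : d1 a = 0 := by simp [hd1_def, hχ₁a, hdχ₁a]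
  have hd1b : d1 b = 0 := by simp [hd1_def, hχ₁b, hdχ₁b]
  -- norm bounds for the amplitude
  have hb₁0 : ∀ y ∈ J, ‖χ₁ y‖ ≤ C := by
    intro y hy
    simpa using hbnd 0 (by norm_num) x₁ hx₁I y hy
  have hb₂0 : ∀ y ∈ J, ‖χ₂ y‖ ≤ C := by
    intro y hy
    simpa using hbnd 0 (by norm_num) x₂ hx₂I y hy
  have hb₁1 : ∀ y ∈ J, ‖deriv χ₁ y‖ ≤ C / δy := by
    intro y hy
    simpa [iteratedDeriv_one] using hbnd 1 (by norm_num) x₁ hx₁I y hy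
  have hb₂1 : ∀ y ∈ J, ‖deriv χ₂ y‖ ≤ C / δy := by
    intro y hy
    simpa [iteratedDeriv_one] using hbnd 1 (by norm_num) x₂ hx₂I y hy
  have hb₁2 : ∀ y ∈ J, ‖deriv (deriv χ₁) y‖ ≤ C / δy ^ 2 := by
    intro y hy
    have := hbnd 2 (by norm_num) x₁ hx₁I y hy
    rwa [show (2:ℕ) = 1 + 1 from rfl, iteratedDeriv_succ, iteratedDeriv_one] at this
  have hb₂2 : ∀ y ∈ J, ‖deriv (deriv χ₂) y‖ ≤ C / δy ^ 2 := by
    intro y hy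
    have := hbnd 2 (by norm_num) x₂ hx₂I y hy
    rwa [show (2:ℕ) = 1 + 1 from rfl, iteratedDeriv_succ, iteratedDeriv_one] at this
  have hCδ : 0 ≤ C / δy := by positivity
  have hCδ2 : 0 ≤ C / δy ^ 2 := by positivity
  have hgB : ∀ y ∈ J, ‖g y‖ ≤ C * C := by
    intro y hy
    rw [hg_def]
    simp only [norm_mul, RCLike.norm_conj]
    exact mul_le_mul (hb₁0 y hy) (hb₂0 y hy) (norm_nonneg _) hC.le
  have hd1B : ∀ y ∈ J, ‖d1 y‖ ≤ C / δy * C + C * (C / δy) := by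
    intro y hy
    rw [hd1_def]
    refine le_trans (norm_add_le _ _) (add_le_add ?_ ?_) <;>
      simp only [norm_mul, RCLike.norm_conj]
    · exact mul_le_mul (hb₁1 y hy) (hb₂0 y hy) (norm_nonneg _) hCδ
    · exact mul_le_mul (hb₁0 y hy) (hb₂1 y hy) (norm_nonneg _) hC.le
  have hd2B : ∀ y ∈ J, ‖d2 y‖ ≤
      (C / δy ^ 2 * C + C / δy * (C / δy)) + (C / δy * (C / δy) + C * (C / δy ^ 2)) := by
    intro y hy
    rw [hd2_def]
    refine le_trans (norm_add_le _ _) (add_le_add ?_ ?_) <;>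
      refine le_trans (norm_add_le _ _) (add_le_add ?_ ?_) <;>
        simp only [norm_mul, RCLike.norm_conj]
    · exact mul_le_mul (hb₁2 y hy) (hb₂0 y hy) (norm_nonneg _) hCδ2
    · exact mul_le_mul (hb₁1 y hy) (hb₂1 y hy) (norm_nonneg _) hCδ
    · exact mul_le_mul (hb₁1 y hy) (hb₂1 y hy) (norm_nonneg _) hCδ
    · exact mul_le_mul (hb₁0 y hy) (hb₂2 y hy) (norm_nonneg _) hC.le
  -- partial derivative machinery for the phase
  set SS : ℝ × ℝ → ℝ := fun p => S p.1 p.2 with hSS_def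
  set P : ℝ × ℝ → ℝ := pdy SS with hP_def
  set M : ℝ × ℝ → ℝ := pdx P with hM_def
  set Z : ℝ × ℝ → ℝ := pdy P with hZ_def
  set Z₂ : ℝ × ℝ → ℝ := pdy Z with hZ₂_def
  set N₁ : ℝ × ℝ → ℝ := pdy M with hN₁_def
  have hPs : ContDiffOn ℝ (⊤ : ℕ∞) P O := contDiffOn_pdy hO hS
  have hMs : ContDiffOn ℝ (⊤ : ℕ∞) M O := contDiffOn_pdx hO hPs
  have hZs : ContDiffOn ℝ (⊤ : ℕ∞) Z O := contDiffOn_pdy hO hPs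
  have hZ₂s : ContDiffOn ℝ (⊤ : ℕ∞) Z₂ O := contDiffOn_pdy hO hZs
  have hN₁s : ContDiffOn ℝ (⊤ : ℕ∞) N₁ O := contDiffOn_pdy hO hMs
  -- basic derivative facts
  have hSd : ∀ x y, (x, y) ∈ O → HasDerivAt (fun y' => S x y') (P (x, y)) y :=
    fun x y hp => hasDerivAt_pdy hO hS hp
  have hPdy : ∀ x y, (x, y) ∈ O → HasDerivAt (fun y' => P (x, y')) (Z (x, y)) y :=
    fun x y hp => hasDerivAt_pdy hO hPs hp
  have hPdx : ∀ x y, (x, y) ∈ O → HasDerivAt (fun x' => P (x', y)) (M (x, y)) x :=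
    fun x y hp => hasDerivAt_pdx hO hPs hp
  have hZdy : ∀ x y, (x, y) ∈ O → HasDerivAt (fun y' => Z (x, y')) (Z₂ (x, y)) y :=
    fun x y hp => hasDerivAt_pdy hO hZs hp
  have hZdx : ∀ x y, (x, y) ∈ O → HasDerivAt (fun x' => Z (x', y)) (pdx Z (x, y)) x :=
    fun x y hp => hasDerivAt_pdx hO hZs hp
  have hZ₂dx : ∀ x y, (x, y) ∈ O → HasDerivAt (fun x' => Z₂ (x', y)) (pdx Z₂ (x, y)) x :=
    fun x y hp => hasDerivAt_pdx hO hZ₂s hp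
  have hMdy : ∀ x y, (x, y) ∈ O → HasDerivAt (fun y' => M (x, y')) (N₁ (x, y)) y :=
    fun x y hp => hasDerivAt_pdy hO hMs hp
  have hN₁dy : ∀ x y, (x, y) ∈ O → HasDerivAt (fun y' => N₁ (x, y')) (pdy N₁ (x, y)) y :=
    fun x y hp => hasDerivAt_pdy hO hN₁s hp
  -- horizontal and vertical open slices of O
  have hslice_x : ∀ x y, (x, y) ∈ O → {x' : ℝ | (x', y) ∈ O} ∈ nhds x := by
    intro x y hp
    have : IsOpen {x' : ℝ | (x', y) ∈ O} :=
      hO.preimage (continuous_id.prodMk continuous_const)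
    exact this.mem_nhds hp
  have hslice_y : ∀ x y, (x, y) ∈ O → {y' : ℝ | (x, y') ∈ O} ∈ nhds y := by
    intro x y hp
    have : IsOpen {y' : ℝ | (x, y') ∈ O} :=
      hO.preimage (continuous_const.prodMk continuous_id)
    exact this.mem_nhds hp
  -- identification of M with the mixed partial
  have hMm : ∀ x y, (x, y) ∈ O → mixedPartial S x y = M (x, y) := by
    intro x y hp
    have hev : (fun x' => deriv (fun y' => S x' y') y) =ᶠ[nhds x]
        (fun x' => P (x', y)) := by
      filter_upwards [hslice_x x y hp] with x' hx'
      exact (hSd x' y hx').deriv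
    show deriv (fun x' => deriv (fun y' => S x' y') y) x = _
    rw [hev.deriv_eq]
    exact (hPdx x y hp).deriv
  -- identification of the y-derivatives of the mixed partial
  have hN₁m : ∀ x y, (x, y) ∈ O →
      iteratedDeriv 1 (fun y' => mixedPartial S x y') y = N₁ (x, y) := by
    intro x y hp
    rw [iteratedDeriv_one]
    have hev : (fun y' => mixedPartial S x y') =ᶠ[nhds y] (fun y' => M (x, y')) := by
      filter_upwards [hslice_y x y hp] with y' hy'
      exact hMm x y' hy'
    rw [hev.deriv_eq]
    exact (hMdy x y hp).deriv
  have hN₂m : ∀ x y, (x, y) ∈ O →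
      iteratedDeriv 2 (fun y' => mixedPartial S x y') y = pdy N₁ (x, y) := by
    intro x y hp
    rw [show (2:ℕ) = 1 + 1 from rfl, iteratedDeriv_succ]
    have hev : (fun y' => iteratedDeriv 1 (fun t => mixedPartial S x t) y') =ᶠ[nhds y]
        (fun y' => N₁ (x, y')) := by
      filter_upwards [hslice_y x y hp] with y' hy'
      exact hN₁m x y' hy'
    rw [hev.deriv_eq]
    exact (hN₁dy x y hp).deriv
  -- Schwarz symmetry
  have hZxN₁ : ∀ p ∈ O, pdx Z p = N₁ p := fun p hp => schwarz hO hPs hp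
  have hZ₂xN₂ : ∀ p ∈ O, pdx Z₂ p = pdy N₁ p := by
    intro p hp
    have h1 : pdx (pdy Z) p = pdy (pdx Z) p := schwarz hO hZs hp
    have h2 : pdy (pdx Z) p = pdy N₁ p := by
      have hev : pdx Z =ᶠ[nhds p] N₁ := by
        filter_upwards [hO.mem_nhds hp] with q hq
        exact hZxN₁ q hq
      show fderiv ℝ (pdx Z) p (0, 1) = fderiv ℝ N₁ p (0, 1)
      rw [hev.fderiv_eq]
    exact h1.trans h2
  -- the phase and the oscillatory factor
  set Φ : ℝ → ℝ := fun y => S x₁ y - S x₂ y with hΦ_def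
  set E : ℝ → ℂ := fun y => Complex.exp (Complex.I * lam * ((Φ y : ℝ) : ℂ)) with hE_def
  have hEnorm : ∀ y, ‖E y‖ = 1 := by
    intro y
    have harg : Complex.I * lam * ((Φ y : ℝ) : ℂ) = ((lam * Φ y : ℝ) : ℂ) * Complex.I := by
      push_cast; ring
    show ‖Complex.exp (Complex.I * lam * ((Φ y : ℝ) : ℂ))‖ = 1
    rw [harg, Complex.norm_exp_ofReal_mul_I]
  have hfE : ∀ y, Complex.exp (Complex.I * ↑lam * (↑(S x₁ y) - ↑(S x₂ y))) * χ x₁ y *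
      (starRingEnd ℂ) (χ x₂ y) = E y * g y := by
    intro y
    rw [hE_def, hg_def, hΦ_def]
    show Complex.exp (Complex.I * ↑lam * (↑(S x₁ y) - ↑(S x₂ y))) * χ x₁ y *
      (starRingEnd ℂ) (χ x₂ y) =
      Complex.exp (Complex.I * ↑lam * ((S x₁ y - S x₂ y : ℝ) : ℂ)) * (χ₁ y * (starRingEnd ℂ) (χ₂ y))
    rw [hχ₁_def, hχ₂_def]
    push_cast
    ring
  have hgoal_int : (∫ y : ℝ, Complex.exp (Complex.I * ↑lam * (↑(S x₁ y) - ↑(S x₂ y))) * χ x₁ y *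
      (starRingEnd ℂ) (χ x₂ y)) = ∫ y in a..b, E y * g y := by
    rw [show (fun y : ℝ => Complex.exp (Complex.I * ↑lam * (↑(S x₁ y) - ↑(S x₂ y))) * χ x₁ y *
      (starRingEnd ℂ) (χ x₂ y)) = fun y => E y * g y from funext hfE]
    symm
    apply intervalIntegral.integral_eq_integral_of_support_subset
    intro y hy
    by_contra hyIoc
    apply hy
    rcases eq_or_ne y a with rfl | hya'
    · exact mul_eq_zero_of_right _ hga
    · have : y ∉ J := by
        intro hmem
        exact hyIoc ⟨lt_of_le_of_ne hmem.1 (Ne.symm hya'), hmem.2⟩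
      simp [hg_def, hχ₁J y this]
  rw [hgoal_int]
  have habs : |b - a| = δy := by
    rw [hb_def, ha_def]
    simp [abs_of_nonneg hδy.le]
  have hIoc_sub_J : Set.uIoc a b ⊆ J := by
    rw [Set.uIoc_of_le hab]
    exact Ioc_subset_Icc_self
  by_cases hA : lam * μ * δy * |x₁ - x₂| ≤ 1
  · -- small-oscillation case : trivial bound
    have hnorm : ∀ y ∈ Set.uIoc a b, ‖E y * g y‖ ≤ C * C := by
      intro y hy
      rw [norm_mul, hEnorm, one_mul]
      exact hgB y (hIoc_sub_J hy)
    have hbound := intervalIntegral.norm_integral_le_of_norm_le_const hnorm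
    rw [habs] at hbound
    refine le_trans hbound ?_
    rw [le_div_iff₀ hden]
    have h0 : 0 ≤ lam * μ * δy * |x₁ - x₂| := by positivity
    have hA2 : lam ^ 2 * μ ^ 2 * δy ^ 2 * (x₁ - x₂) ^ 2 ≤ 1 := by
      have h1 : (lam * μ * δy * |x₁ - x₂|) ^ 2 ≤ 1 := by nlinarith [hA, h0]
      calc lam ^ 2 * μ ^ 2 * δy ^ 2 * (x₁ - x₂) ^ 2
          = (lam * μ * δy * |x₁ - x₂|) ^ 2 := by
            rw [mul_pow, mul_pow, mul_pow, sq_abs]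
        _ ≤ 1 := h1
    have hA20 : 0 ≤ lam ^ 2 * μ ^ 2 * δy ^ 2 * (x₁ - x₂) ^ 2 := by positivity
    rw [hC'def]
    nlinarith [hδy, hC, hA2, hA20, sq_nonneg C, sq_nonneg (C*C),
      mul_pos hδy (mul_pos hC hC)]
  · -- large-oscillation case : double integration by parts
    have hA1 : 1 < lam * μ * δy * |x₁ - x₂| := not_le.mp hA
    have hne : x₁ ≠ x₂ := by
      intro h
      rw [h, sub_self, abs_zero, mul_zero] at hA1
      linarith
    have hD : 0 < |x₁ - x₂| := abs_pos.mpr (sub_ne_zero.mpr hne)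
    set D : ℝ := |x₁ - x₂| with hD_def
    set m₀ : ℝ := lam * μ * D with hm₀_def
    have hm₀ : 0 < m₀ := by positivity
    have hrect : ∀ x y, x ∈ I → y ∈ J → (x, y) ∈ O := fun x y hx hy => hRO ⟨hx, hy⟩
    have hsub_I : Icc (min x₁ x₂) (max x₁ x₂) ⊆ I := by
      rw [hI_def]
      exact Icc_subset_Icc (le_min hx₁I.1 hx₂I.1) (max_le hx₁I.2 hx₂I.2)
    set r₁ : ℝ → ℝ := fun y => P (x₁, y) - P (x₂, y) with hr₁_def
    set r₂ : ℝ → ℝ := fun y => Z (x₁, y) - Z (x₂, y) with hr₂_def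
    set r₃ : ℝ → ℝ := fun y => Z₂ (x₁, y) - Z₂ (x₂, y) with hr₃_def
    have hΦd : ∀ y ∈ J, HasDerivAt Φ (r₁ y) y := fun y hy =>
      (hSd x₁ y (hrect x₁ y hx₁I hy)).sub (hSd x₂ y (hrect x₂ y hx₂I hy))
    have hr₁d : ∀ y ∈ J, HasDerivAt r₁ (r₂ y) y := fun y hy =>
      (hPdy x₁ y (hrect x₁ y hx₁I hy)).sub (hPdy x₂ y (hrect x₂ y hx₂I hy))
    have hr₂d : ∀ y ∈ J, HasDerivAt r₂ (r₃ y) y := fun y hy =>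
      (hZdy x₁ y (hrect x₁ y hx₁I hy)).sub (hZdy x₂ y (hrect x₂ y hx₂I hy))
    have hr₁c : ContinuousOn r₁ J := fun y hy => (hr₁d y hy).continuousAt.continuousWithinAt
    have hr₂c : ContinuousOn r₂ J := fun y hy => (hr₂d y hy).continuousAt.continuousWithinAt
    have hr₃c : ContinuousOn r₃ J := by
      have h1 : ContinuousOn (fun y : ℝ => Z₂ (x₁, y)) J :=
        (hZ₂s.continuousOn).comp (Continuous.continuousOn
          (continuous_const.prodMk continuous_id))
          (fun y hy => hrect x₁ y hx₁I hy)
      have h2 : ContinuousOn (fun y : ℝ => Z₂ (x₂, y)) J :=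
        (hZ₂s.continuousOn).comp (Continuous.continuousOn
          (continuous_const.prodMk continuous_id))
          (fun y hy => hrect x₂ y hx₂I hy)
      exact h1.sub h2
    -- lower bound on the derivative of the phase
    have hr₁low : ∀ y ∈ J, μ * D ≤ |r₁ y| := by
      intro y hy
      obtain ⟨c, hc, hcv⟩ := mvt_between hne
        (fun x hx => hPdx x y (hrect x y (hsub_I hx) hy))
      have hcI : c ∈ I := hsub_I hc
      have hμc : μ ≤ |M (c, y)| := by
        have := hm c hcI y hy
        rwa [hMm c y (hrect c y hcI hy)] at this
      calc μ * D ≤ |M (c, y)| * D := mul_le_mul_of_nonneg_right hμc hD.le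
        _ = |r₁ y| := by rw [hr₁_def]; simp only []; rw [hcv, abs_mul, hD_def]
    -- upper bounds on the higher derivatives of the phase
    have hr₂up : ∀ y ∈ J, |r₂ y| ≤ C * μ / δy * D := by
      intro y hy
      obtain ⟨c, hc, hcv⟩ := mvt_between hne
        (fun x hx => hZdx x y (hrect x y (hsub_I hx) hy))
      have hcI : c ∈ I := hsub_I hc
      have hb : |pdx Z (c, y)| ≤ C * μ / δy := by
        rw [hZxN₁ (c, y) (hrect c y hcI hy), ← hN₁m c y (hrect c y hcI hy)]
        have := hd 1 (by norm_num) (by norm_num) c hcI y hy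
        rwa [pow_one] at this
      calc |r₂ y| = |pdx Z (c, y)| * D := by
            rw [hr₂_def]; simp only []; rw [hcv, abs_mul, hD_def]
        _ ≤ C * μ / δy * D := mul_le_mul_of_nonneg_right hb hD.le
    have hr₃up : ∀ y ∈ J, |r₃ y| ≤ C * μ / δy ^ 2 * D := by
      intro y hy
      obtain ⟨c, hc, hcv⟩ := mvt_between hne
        (fun x hx => hZ₂dx x y (hrect x y (hsub_I hx) hy))
      have hcI : c ∈ I := hsub_I hc
      have hb : |pdx Z₂ (c, y)| ≤ C * μ / δy ^ 2 := by
        rw [hZ₂xN₂ (c, y) (hrect c y hcI hy), ← hN₂m c y (hrect c y hcI hy)]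
        exact hd 2 (by norm_num) (by norm_num) c hcI y hy
      calc |r₃ y| = |pdx Z₂ (c, y)| * D := by
            rw [hr₃_def]; simp only []; rw [hcv, abs_mul, hD_def]
        _ ≤ C * μ / δy ^ 2 * D := mul_le_mul_of_nonneg_right hb hD.le
    -- the complex multiplier W = iλΦ'
    set W : ℝ → ℂ := fun y => Complex.I * lam * ((r₁ y : ℝ) : ℂ) with hW_def
    set Wd : ℝ → ℂ := fun y => Complex.I * lam * ((r₂ y : ℝ) : ℂ) with hWd_def
    set Wdd : ℝ → ℂ := fun y => Complex.I * lam * ((r₃ y : ℝ) : ℂ) with hWdd_def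
    have hWnorm : ∀ y, ‖W y‖ = lam * |r₁ y| := by
      intro y
      rw [hW_def]
      simp only [norm_mul, Complex.norm_I, Complex.norm_real, Real.norm_eq_abs, one_mul,
        abs_of_pos hlam]
    have hWlow : ∀ y ∈ J, m₀ ≤ ‖W y‖ := by
      intro y hy
      rw [hWnorm, hm₀_def]
      calc lam * μ * D = lam * (μ * D) := by ring
        _ ≤ lam * |r₁ y| := mul_le_mul_of_nonneg_left (hr₁low y hy) hlam.le
    have hW0 : ∀ y ∈ J, W y ≠ 0 := by
      intro y hy h0
      have := hWlow y hy
      rw [h0, norm_zero] at this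
      linarith
    have hWdB : ∀ y ∈ J, ‖Wd y‖ ≤ C * m₀ / δy := by
      intro y hy
      rw [hWd_def]
      simp only [norm_mul, Complex.norm_I, Complex.norm_real, Real.norm_eq_abs, one_mul,
        abs_of_pos hlam]
      calc lam * |r₂ y| ≤ lam * (C * μ / δy * D) :=
            mul_le_mul_of_nonneg_left (hr₂up y hy) hlam.le
        _ = C * m₀ / δy := by rw [hm₀_def]; ring
    have hWddB : ∀ y ∈ J, ‖Wdd y‖ ≤ C * m₀ / δy ^ 2 := by
      intro y hy
      rw [hWdd_def]
      simp only [norm_mul, Complex.norm_I, Complex.norm_real, Real.norm_eq_abs, one_mul,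
        abs_of_pos hlam]
      calc lam * |r₃ y| ≤ lam * (C * μ / δy ^ 2 * D) :=
            mul_le_mul_of_nonneg_left (hr₃up y hy) hlam.le
        _ = C * m₀ / δy ^ 2 := by rw [hm₀_def]; ring
    have hWder : ∀ y ∈ J, HasDerivAt W (Wd y) y := by
      intro y hy
      have := ((hr₁d y hy).ofReal_comp).const_mul (Complex.I * lam)
      simpa [hW_def, hWd_def, mul_assoc] using this
    have hWdder : ∀ y ∈ J, HasDerivAt Wd (Wdd y) y := by
      intro y hy
      have := ((hr₂d y hy).ofReal_comp).const_mul (Complex.I * lam)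
      simpa [hWd_def, hWdd_def, mul_assoc] using this
    have hWc : ContinuousOn W J := fun y hy => (hWder y hy).continuousAt.continuousWithinAt
    have hWdc : ContinuousOn Wd J := fun y hy => (hWdder y hy).continuousAt.continuousWithinAt
    have hWddc : ContinuousOn Wdd J := by
      rw [hWdd_def]
      exact continuous_const.continuousOn.mul (Complex.continuous_ofReal.comp_continuousOn hr₃c)
    -- the integrands after one and two integrations by parts
    set u₁ : ℝ → ℂ := fun y => g y / W y with hu₁_def
    set u₁d : ℝ → ℂ := fun y => d1 y / W y - g y * Wd y / (W y) ^ 2 with hu₁d_def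
    set u₂ : ℝ → ℂ := fun y => u₁d y / W y with hu₂_def
    set u₁dd : ℝ → ℂ := fun y => d2 y / W y - g y * Wdd y / (W y) ^ 2
      - 2 * d1 y * Wd y / (W y) ^ 2 + 2 * g y * (Wd y) ^ 2 / (W y) ^ 3 with hu₁dd_def
    set u₂d : ℝ → ℂ := fun y => u₁dd y / W y - u₁d y * Wd y / (W y) ^ 2 with hu₂d_def
    have hu₁der : ∀ y ∈ J, HasDerivAt u₁ (u₁d y) y := by
      intro y hy
      have h := (hgd y).div (hWder y hy) (hW0 y hy)
      have heq : (d1 y * W y - g y * Wd y) / W y ^ 2 = u₁d y := by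
        rw [hu₁d_def]
        have h0 := hW0 y hy
        field_simp [h0]
      exact heq ▸ h
    have hu₁dder : ∀ y ∈ J, HasDerivAt u₁d (u₁dd y) y := by
      intro y hy
      have h0 := hW0 y hy
      have part1 := (hd1d y).div (hWder y hy) h0
      have hWsq : HasDerivAt (fun t => W t * W t) (Wd y * W y + W y * Wd y) y :=
        (hWder y hy).mul (hWder y hy)
      have hnum := (hgd y).mul (hWdder y hy)
      have part2 := hnum.div hWsq (mul_ne_zero h0 h0)
      have htot := part1.sub part2
      have heq : (d2 y * W y - d1 y * Wd y) / W y ^ 2 -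
          ((d1 y * Wd y + g y * Wdd y) * (W y * W y) - g y * Wd y * (Wd y * W y + W y * Wd y)) /
            (W y * W y) ^ 2 = u₁dd y := by
        rw [hu₁dd_def]
        field_simp [h0]
        ring
      have hfun : (fun x => d1 x / W x - g x * Wd x / (W x * W x)) = u₁d := by
        funext t
        rw [hu₁d_def]
        show d1 t / W t - g t * Wd t / (W t * W t) = d1 t / W t - g t * Wd t / (W t) ^ 2
        ring
      exact hfun ▸ heq ▸ htot
    have hu₂der : ∀ y ∈ J, HasDerivAt u₂ (u₂d y) y := by
      intro y hy
      have h0 := hW0 y hy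
      have h := (hu₁dder y hy).div (hWder y hy) h0
      have heq : (u₁dd y * W y - u₁d y * Wd y) / W y ^ 2 = u₂d y := by
        rw [hu₂d_def]
        field_simp [h0]
      exact heq ▸ h
    -- endpoint vanishing of the integrands
    have hu₁a : u₁ a = 0 := by rw [hu₁_def]; simp [hga]
    have hu₁b : u₁ b = 0 := by rw [hu₁_def]; simp [hgb]
    have hu₂a : u₂ a = 0 := by rw [hu₂_def]; simp [hu₁d_def, hga, hd1a]
    have hu₂b : u₂ b = 0 := by rw [hu₂_def]; simp [hu₁d_def, hgb, hd1b]
    -- continuity of the integrands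
    have hgc : Continuous g := by
      rw [hg_def]
      exact hχ₁s.continuous.mul (Complex.continuous_conj.comp hχ₂s.continuous)
    have hd1c : Continuous d1 := by
      rw [hd1_def]
      exact (hχ₁ds.continuous.mul (Complex.continuous_conj.comp hχ₂s.continuous)).add
        (hχ₁s.continuous.mul (Complex.continuous_conj.comp hχ₂ds.continuous))
    have hχ₁dds : ContDiff ℝ (⊤ : ℕ∞) (deriv (deriv χ₁)) := (contDiff_infty_iff_deriv.mp hχ₁ds).2
    have hχ₂dds : ContDiff ℝ (⊤ : ℕ∞) (deriv (deriv χ₂)) := (contDiff_infty_iff_deriv.mp hχ₂ds).2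
    have hd2c : Continuous d2 := by
      rw [hd2_def]
      exact ((hχ₁dds.continuous.mul (Complex.continuous_conj.comp hχ₂s.continuous)).add
        (hχ₁ds.continuous.mul (Complex.continuous_conj.comp hχ₂ds.continuous))).add
        ((hχ₁ds.continuous.mul (Complex.continuous_conj.comp hχ₂ds.continuous)).add
        (hχ₁s.continuous.mul (Complex.continuous_conj.comp hχ₂dds.continuous)))
    have hJ_uIcc : Set.uIcc a b = J := by rw [hJ_def]; exact Set.uIcc_of_le hab
    -- continuity of the integrands on J
    have hu₁dc : ContinuousOn u₁d J := by
      rw [hu₁d_def]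
      exact (hd1c.continuousOn.div hWc hW0).sub
        ((hgc.continuousOn.mul hWdc).div (hWc.pow 2) (fun y hy => pow_ne_zero 2 (hW0 y hy)))
    have hu₁ddc : ContinuousOn u₁dd J := by
      rw [hu₁dd_def]
      refine ContinuousOn.add (ContinuousOn.sub (ContinuousOn.sub ?_ ?_) ?_) ?_
      · exact hd2c.continuousOn.div hWc hW0
      · exact (hgc.continuousOn.mul hWddc).div (hWc.pow 2)
          (fun y hy => pow_ne_zero 2 (hW0 y hy))
      · exact ((continuous_const.continuousOn.mul hd1c.continuousOn).mul hWdc).div (hWc.pow 2)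
          (fun y hy => pow_ne_zero 2 (hW0 y hy))
      · exact ((continuous_const.continuousOn.mul hgc.continuousOn).mul (hWdc.pow 2)).div
          (hWc.pow 3) (fun y hy => pow_ne_zero 3 (hW0 y hy))
    have hu₂dc : ContinuousOn u₂d J := by
      rw [hu₂d_def]
      exact (hu₁ddc.div hWc hW0).sub
        ((hu₁dc.mul hWdc).div (hWc.pow 2) (fun y hy => pow_ne_zero 2 (hW0 y hy)))
    -- two integrations by parts
    have hΦ' : ∀ y ∈ Set.uIcc a b, HasDerivAt Φ (r₁ y) y := by rw [hJ_uIcc]; exact hΦd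
    have hr₁' : ContinuousOn r₁ (Set.uIcc a b) := by rw [hJ_uIcc]; exact hr₁c
    have s1 := step a b lam Φ r₁ u₁ u₁d hΦ'
      (by rw [hJ_uIcc]; exact hu₁der) hr₁' (by rw [hJ_uIcc]; exact hu₁dc) hu₁a hu₁b
    have s2 := step a b lam Φ r₁ u₂ u₂d hΦ'
      (by rw [hJ_uIcc]; exact hu₂der) hr₁' (by rw [hJ_uIcc]; exact hu₂dc) hu₂a hu₂b
    have c1 : (∫ y in a..b, E y * g y)
        = ∫ y in a..b, E y * (Complex.I * lam * ((r₁ y : ℝ) : ℂ) * u₁ y) := by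
      apply intervalIntegral.integral_congr
      intro y hy
      have hyJ : y ∈ J := by rwa [hJ_uIcc] at hy
      have h0 : W y ≠ 0 := hW0 y hyJ
      show E y * g y = E y * (W y * u₁ y)
      rw [hu₁_def]
      show E y * g y = E y * (W y * (g y / W y))
      rw [mul_comm (W y), div_mul_cancel₀ _ h0]
    have c2 : (∫ y in a..b, E y * u₁d y)
        = ∫ y in a..b, E y * (Complex.I * lam * ((r₁ y : ℝ) : ℂ) * u₂ y) := by
      apply intervalIntegral.integral_congr
      intro y hy
      have hyJ : y ∈ J := by rwa [hJ_uIcc] at hy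
      have h0 : W y ≠ 0 := hW0 y hyJ
      show E y * u₁d y = E y * (W y * u₂ y)
      rw [hu₂_def]
      show E y * u₁d y = E y * (W y * (u₁d y / W y))
      rw [mul_comm (W y), div_mul_cancel₀ _ h0]
    have key : (∫ y in a..b, E y * g y) = ∫ y in a..b, E y * u₂d y := by
      calc (∫ y in a..b, E y * g y)
          = ∫ y in a..b, E y * (Complex.I * lam * ((r₁ y : ℝ) : ℂ) * u₁ y) := c1
        _ = -∫ y in a..b, E y * u₁d y := s1
        _ = -∫ y in a..b, E y * (Complex.I * lam * ((r₁ y : ℝ) : ℂ) * u₂ y) := by rw [c2]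
        _ = -(-∫ y in a..b, E y * u₂d y) := by rw [s2]
        _ = ∫ y in a..b, E y * u₂d y := neg_neg _
    rw [key]
    -- the pointwise bound on the final integrand
    set Q : ℝ := 4 * C ^ 2 + 7 * C ^ 3 + 3 * C ^ 4 with hQ_def
    have hQpos : 0 < Q := by positivity
    have hm₀2 : (0:ℝ) < m₀ ^ 2 := by positivity
    have hm₀3 : (0:ℝ) < m₀ ^ 3 := by positivity
    have hu₂dB : ∀ y ∈ J, ‖u₂d y‖ ≤ Q / (δy ^ 2 * m₀ ^ 2) := by
      intro y hy
      have h0 := hW0 y hy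
      have hW1 := hWlow y hy
      have hW2 : m₀ ^ 2 ≤ ‖(W y) ^ 2‖ := by
        rw [norm_pow]; exact pow_le_pow_left₀ hm₀.le hW1 2
      have hW3 : m₀ ^ 3 ≤ ‖(W y) ^ 3‖ := by
        rw [norm_pow]; exact pow_le_pow_left₀ hm₀.le hW1 3
      have h2n : ‖(2:ℂ)‖ = 2 := by norm_num
      have h1 : ‖u₁d y‖ ≤ (C / δy * C + C * (C / δy)) / m₀
          + C * C * (C * m₀ / δy) / m₀ ^ 2 := by
        rw [hu₁d_def]
        refine le_trans (norm_sub_le _ _) (add_le_add ?_ ?_)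
        · exact div_norm_le (hd1B y hy) hm₀ hW1
        · refine div_norm_le ?_ hm₀2 hW2
          rw [norm_mul]
          exact mul_le_mul (hgB y hy) (hWdB y hy) (norm_nonneg _) (by positivity)
      have h2 : ‖u₁dd y‖ ≤
          ((C / δy ^ 2 * C + C / δy * (C / δy)) + (C / δy * (C / δy) + C * (C / δy ^ 2))) / m₀
          + C * C * (C * m₀ / δy ^ 2) / m₀ ^ 2
          + 2 * (C / δy * C + C * (C / δy)) * (C * m₀ / δy) / m₀ ^ 2
          + 2 * (C * C) * (C * m₀ / δy) ^ 2 / m₀ ^ 3 := by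
        rw [hu₁dd_def]
        refine le_trans (norm_add_le _ _) (add_le_add (le_trans (norm_sub_le _ _)
          (add_le_add (le_trans (norm_sub_le _ _) (add_le_add ?_ ?_)) ?_)) ?_)
        · exact div_norm_le (hd2B y hy) hm₀ hW1
        · refine div_norm_le ?_ hm₀2 hW2
          rw [norm_mul]
          exact mul_le_mul (hgB y hy) (hWddB y hy) (norm_nonneg _) (by positivity)
        · refine div_norm_le ?_ hm₀2 hW2
          rw [norm_mul, norm_mul, h2n]
          exact mul_le_mul (mul_le_mul le_rfl (hd1B y hy) (norm_nonneg _) (by norm_num))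
            (hWdB y hy) (norm_nonneg _) (by positivity)
        · refine div_norm_le ?_ hm₀3 hW3
          rw [norm_mul, norm_mul, h2n, norm_pow]
          refine mul_le_mul (mul_le_mul le_rfl (hgB y hy) (norm_nonneg _) (by norm_num))
            ?_ (by positivity) (by positivity)
          exact pow_le_pow_left₀ (norm_nonneg _) (hWdB y hy) 2
      have h3 : ‖u₂d y‖ ≤
          (((C / δy ^ 2 * C + C / δy * (C / δy)) + (C / δy * (C / δy) + C * (C / δy ^ 2))) / m₀
          + C * C * (C * m₀ / δy ^ 2) / m₀ ^ 2
          + 2 * (C / δy * C + C * (C / δy)) * (C * m₀ / δy) / m₀ ^ 2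
          + 2 * (C * C) * (C * m₀ / δy) ^ 2 / m₀ ^ 3) / m₀
          + ((C / δy * C + C * (C / δy)) / m₀
            + C * C * (C * m₀ / δy) / m₀ ^ 2) * (C * m₀ / δy) / m₀ ^ 2 := by
        rw [hu₂d_def]
        refine le_trans (norm_sub_le _ _) (add_le_add ?_ ?_)
        · exact div_norm_le h2 hm₀ hW1
        · refine div_norm_le ?_ hm₀2 hW2
          rw [norm_mul]
          exact mul_le_mul h1 (hWdB y hy) (norm_nonneg _)
            (by positivity)
      refine le_trans h3 (le_of_eq ?_)
      have hδ0 : δy ≠ 0 := ne_of_gt hδy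
      have hm0 : m₀ ≠ 0 := ne_of_gt hm₀
      rw [hQ_def]
      field_simp
      ring
    have hnormI : ∀ y ∈ Set.uIoc a b, ‖E y * u₂d y‖ ≤ Q / (δy ^ 2 * m₀ ^ 2) := by
      intro y hy
      rw [norm_mul, hEnorm, one_mul]
      exact hu₂dB y (hIoc_sub_J hy)
    have hbound := intervalIntegral.norm_integral_le_of_norm_le_const hnormI
    rw [habs] at hbound
    refine le_trans hbound ?_
    have hXeq : lam ^ 2 * μ ^ 2 * δy ^ 2 * (x₁ - x₂) ^ 2 = m₀ ^ 2 * δy ^ 2 := by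
      rw [hm₀_def, hD_def, mul_pow, mul_pow, sq_abs]
      ring
    have hmδ : 1 < m₀ * δy := by
      have : m₀ * δy = lam * μ * δy * |x₁ - x₂| := by rw [hm₀_def, hD_def]; ring
      rw [this]; exact hA1
    have hT : 1 < m₀ ^ 2 * δy ^ 2 := by nlinarith [hmδ, mul_pos hm₀ hδy]
    rw [le_div_iff₀ hden, hXeq]
    have hC'Q : C' = 2 * Q + 2 * C ^ 2 + 1 := by rw [hQ_def, hC'def]
    rw [div_mul_eq_mul_div, div_mul_eq_mul_div, div_le_iff₀ (by positivity)]
    have hQT := mul_lt_mul_of_pos_left hT (mul_pos hQpos hδy)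
    nlinarith [hQT, hT, hQpos, hδy, hC, mul_pos hm₀2 (mul_pos hδy hδy),
      mul_nonneg (mul_nonneg (le_of_lt (by positivity : (0:ℝ) < 2 * C ^ 2 + 1)) hδy.le)
        (le_of_lt (lt_trans one_pos hT))]
end

section
/- (Van der Corput lemma with amplitude.) Let k be a positive integer, let Φ ∈ C^k[a,b] be real-valued with Φ^{(k)} ≥ μ > 0 on [a,b], and let Ψ ∈ C¹[a,b] (complex-valued). If k = 1, assume additionally that Φ' is monotonic on [a,b]. Then there is a constant C_k depending only on k such that for all λ > 0, |∫_a^b e^{iλΦ(y)} Ψ(y) dy| ≤ C_k (λμ)^{−1/k} ( |Ψ(b)| + ∫_a^b |Ψ'(y)| dy ). -/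
/-!
For `k = 1` write `e^{iΦ} = (Φ')⁻¹ · (e^{iΦ} Φ')`: the second factor has primitive `-i e^{iΦ}`, so
its integral over every subinterval has norm at most `2`, and the weight `(Φ')⁻¹ ≤ 1/μ` is
monotone. A layer-cake decomposition of the weight reduces to integrals over its superlevel sets,
which are intervals; this gives the bound `2/μ`.

For `k ≥ 2`, `g = Φ^{(k-1)}` grows at rate at least `μ`, so `|g| ≥ δ` outside a middle interval of
length at most `2δ/μ`. The order-`(k-1)` estimate on the two outer pieces (after replacing `Φ` by
`-Φ`, i.e. conjugating, on the left one) and the trivial bound on the middle one give, for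
`δ = μ^{(k-1)/k}`, the constant `C_k = 2 C_{k-1} + 2 = 2^{k+1} - 2`.

Replacing `Φ` by `λΦ` turns `μ` into `λμ`, and integration by parts against the primitive of the
oscillatory factor brings in the amplitude `Ψ`.
-/

open MeasureTheory Set intervalIntegral Complex ComplexConjugate

lemma ContinuousOn.exists_continuous_eqOn_Icc {X : Type*} [TopologicalSpace X] {f : ℝ → X}
    {a b : ℝ} (hab : a ≤ b) (hf : ContinuousOn f (Icc a b)) :
    ∃ g : ℝ → X, Continuous g ∧ EqOn g f (Icc a b) :=
  ⟨fun x => f (projIcc a b hab x),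
    hf.comp_continuous (continuous_subtype_val.comp continuous_projIcc) fun x =>
      (projIcc a b hab x).2,
    fun x hx => by simp only [projIcc_of_mem hab hx]⟩

lemma hasDerivAt_derivWithin_Icc {F : Type*} [NormedAddCommGroup F] [NormedSpace ℝ F]
    {f : ℝ → F} {a b x : ℝ} (hf : DifferentiableOn ℝ f (Icc a b)) (hx : x ∈ Ioo a b) :
    HasDerivAt f (derivWithin f (Icc a b) x) x := by
  have hnhds : Icc a b ∈ nhds x := Icc_mem_nhds hx.1 hx.2
  rw [derivWithin_of_mem_nhds hnhds]
  exact (hf.differentiableAt hnhds).hasDerivAt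

lemma iteratedDerivWithin_Icc_eqOn {n : ℕ} {Φ : ℝ → ℝ} {a b u v : ℝ}
    (hΦ : ContDiffOn ℝ n Φ (Icc a b)) (hau : a ≤ u) (huv : u < v) (hvb : v ≤ b) :
    EqOn (iteratedDerivWithin n Φ (Icc u v)) (iteratedDerivWithin n Φ (Icc a b)) (Icc u v) :=
  fun _ hx => by
    simp only [iteratedDerivWithin_eq_iteratedFDerivWithin, iteratedFDerivWithin_subset
      (Icc_subset_Icc hau hvb) (uniqueDiffOn_Icc huv)
      (uniqueDiffOn_Icc (hau.trans_lt (huv.trans_le hvb))) hΦ hx]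

lemma mul_sub_le_sub_of_le_derivWithin {g : ℝ → ℝ} {a b μ : ℝ}
    (hg : DifferentiableOn ℝ g (Icc a b)) (hge : ∀ x ∈ Icc a b, μ ≤ derivWithin g (Icc a b) x) :
    ∀ x ∈ Icc a b, ∀ y ∈ Icc a b, x ≤ y → μ * (y - x) ≤ g y - g x :=
  (convex_Icc a b).mul_sub_le_image_sub_of_le_deriv hg.continuousOn (hg.mono interior_subset)
    fun x hx => by
      rw [interior_Icc] at hx
      rw [(hasDerivAt_derivWithin_Icc hg hx).deriv]
      exact hge x (Ioo_subset_Icc_self hx)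

lemma monotoneOn_of_mul_sub_le_sub {g : ℝ → ℝ} {s : Set ℝ} {μ : ℝ} (hμ : 0 ≤ μ)
    (hslope : ∀ x ∈ s, ∀ y ∈ s, x ≤ y → μ * (y - x) ≤ g y - g x) : MonotoneOn g s :=
  fun x hx y hy hxy =>
    sub_nonneg.1 ((mul_nonneg hμ (sub_nonneg.2 hxy)).trans (hslope x hx y hy hxy))

section

variable {E : Type*} [NormedAddCommGroup E] [NormedSpace ℝ E]

lemma norm_setIntegral_le_of_ordConnected {f : ℝ → E} {a b B : ℝ} (hab : a ≤ b)
    (hB : ∀ u v, a ≤ u → u ≤ v → v ≤ b → ‖∫ x in u..v, f x‖ ≤ B)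
    {T : Set ℝ} (hT : T.OrdConnected) (hTab : T ⊆ Icc a b) : ‖∫ x in T, f x‖ ≤ B := by
  rcases T.eq_empty_or_nonempty with rfl | hne
  · simpa using hB a a le_rfl le_rfl hab
  have hbdd : BddBelow T := bddBelow_Icc.mono hTab
  have hbdd' : BddAbove T := bddAbove_Icc.mono hTab
  have hle : sInf T ≤ sSup T := csInf_le_csSup hne hbdd hbdd'
  have hae : T =ᵐ[volume] Icc (sInf T) (sSup T) :=
    (subset_Icc_csInf_csSup hbdd hbdd').eventuallyLE.antisymm <| Ioo_ae_eq_Icc.symm.le.trans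
      (IsConnected.Ioo_csInf_csSup_subset ⟨hne, hT.isPreconnected⟩ hbdd hbdd').eventuallyLE
  rw [setIntegral_congr_set hae, integral_Icc_eq_integral_Ioc, ← integral_of_le hle]
  exact hB _ _ (le_csInf hne fun x hx => (hTab hx).1) hle (csSup_le hne fun x hx => (hTab hx).2)

lemma ordConnected_inter_setOf_lt_of_monotoneOn {w : ℝ → ℝ} {s : Set ℝ} (hs : s.OrdConnected)
    (hw : MonotoneOn w s ∨ AntitoneOn w s) (c : ℝ) : (s ∩ {x | c < w x}).OrdConnected := by
  refine ⟨fun x hx y hy z hz => ⟨hs.out hx.1 hy.1 hz, ?_⟩⟩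
  rcases hw with hw | hw
  · exact hx.2.trans_le (hw hx.1 (hs.out hx.1 hy.1 hz) hz.1)
  · exact hy.2.trans_le (hw (hs.out hx.1 hy.1 hz) hy.1 hz.2)

lemma norm_integral_le_add_add {f : ℝ → E} {a p q b : ℝ} (hap : a ≤ p) (hpq : p ≤ q)
    (hqb : q ≤ b) (hf : IntervalIntegrable f volume a b) :
    ‖∫ x in a..b, f x‖ ≤ ‖∫ x in a..p, f x‖ + ‖∫ x in p..q, f x‖ + ‖∫ x in q..b, f x‖ := by
  have hsub : ∀ {u v}, a ≤ u → v ≤ b → u ≤ v → uIcc u v ⊆ uIcc a b := fun hau hvb huv => by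
    rw [uIcc_of_le huv, uIcc_of_le (hau.trans (huv.trans hvb))]; exact Icc_subset_Icc hau hvb
  rw [← integral_add_adjacent_intervals (hf.mono_set (hsub le_rfl hqb (hap.trans hpq)))
      (hf.mono_set (hsub (hap.trans hpq) le_rfl hqb)),
    ← integral_add_adjacent_intervals (hf.mono_set (hsub le_rfl (hpq.trans hqb) hap))
      (hf.mono_set (hsub hap hqb hpq))]
  exact norm_add₃_le

variable [CompleteSpace E]

lemma integral_indicator_Iio_eq_smul {M t : ℝ} (ht : 0 ≤ t) (htM : t ≤ M) (e : E) :
    ∫ s in Ioc 0 M, (Iio t).indicator (fun _ => e) s = t • e := by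
  have hIoo : Iio t ∩ Ioc 0 M = Ioo 0 t := by
    ext; simp only [mem_inter_iff, mem_Iio, mem_Ioc, mem_Ioo]; grind
  rw [integral_indicator_const e measurableSet_Iio, measureReal_restrict_apply measurableSet_Iio,
    hIoo, Real.volume_real_Ioo_of_le ht, sub_zero]

theorem norm_integral_smul_le_of_monotoneOn {f : ℝ → E} {w : ℝ → ℝ} {a b M B : ℝ} (hab : a ≤ b)
    (hf : Continuous f) (hw : Continuous w) (hw0 : ∀ x ∈ Icc a b, 0 ≤ w x)
    (hwM : ∀ x ∈ Icc a b, w x ≤ M) (hmono : MonotoneOn w (Icc a b) ∨ AntitoneOn w (Icc a b))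
    (hB : ∀ u v, a ≤ u → u ≤ v → v ≤ b → ‖∫ x in u..v, f x‖ ≤ B) :
    ‖∫ x in a..b, w x • f x‖ ≤ M * B := by
  set K : ℝ × ℝ → E := {p : ℝ × ℝ | p.2 < w p.1}.indicator (fun p => f p.1)
  have hM : 0 ≤ M := (hw0 a ⟨le_rfl, hab⟩).trans (hwM a ⟨le_rfl, hab⟩)
  have hK : Integrable K ((volume.restrict (Ioc a b)).prod (volume.restrict (Ioc 0 M))) := by
    obtain ⟨C, hC⟩ := isCompact_Icc.exists_bound_of_continuousOn (hf.continuousOn (s := Icc a b))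
    refine Integrable.of_bound ((hf.comp continuous_fst).aestronglyMeasurable.indicator
      (measurableSet_lt measurable_snd (hw.measurable.comp measurable_fst))) C ?_
    rw [Measure.prod_restrict]
    filter_upwards [ae_restrict_mem (measurableSet_Ioc.prod measurableSet_Ioc)] with p hp
    exact (norm_indicator_le_norm_self _ _).trans (hC p.1 (Ioc_subset_Icc_self hp.1))
  have hinner_s : ∀ x ∈ Ioc a b, ∫ s in Ioc 0 M, K (x, s) = w x • f x := fun x hx =>
    integral_indicator_Iio_eq_smul (hw0 x (Ioc_subset_Icc_self hx))
      (hwM x (Ioc_subset_Icc_self hx)) (f x)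
  have hinner_x : ∀ s, ‖∫ x in Ioc a b, K (x, s)‖ ≤ B := fun s => by
    rw [show (fun x => K (x, s)) = {x | s < w x}.indicator f from rfl,
      setIntegral_indicator (measurableSet_lt measurable_const hw.measurable)]
    exact norm_setIntegral_le_of_ordConnected hab hB
      (ordConnected_inter_setOf_lt_of_monotoneOn ordConnected_Ioc
        (hmono.imp (·.mono Ioc_subset_Icc_self) (·.mono Ioc_subset_Icc_self)) s)
      (inter_subset_left.trans Ioc_subset_Icc_self)
  calc ‖∫ x in a..b, w x • f x‖ = ‖∫ x in Ioc a b, ∫ s in Ioc 0 M, K (x, s)‖ := by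
        rw [integral_of_le hab, setIntegral_congr_fun measurableSet_Ioc hinner_s]
    _ = ‖∫ s in Ioc 0 M, ∫ x in Ioc a b, K (x, s)‖ := by
        rw [integral_integral_swap (f := fun x s => K (x, s)) hK]
    _ ≤ B * volume.real (Ioc 0 M) :=
        norm_setIntegral_le_of_norm_le_const measure_Ioc_lt_top fun s _ => hinner_x s
    _ = M * B := by rw [Real.volume_real_Ioc_of_le hM, sub_zero, mul_comm]

end

lemma norm_integral_exp_mul_I_mul_deriv_le {Φ Φ' : ℝ → ℝ} {u v : ℝ} (huv : u ≤ v)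
    (hΦ : ContinuousOn Φ (Icc u v)) (hΦ' : ContinuousOn Φ' (Icc u v))
    (hderiv : ∀ x ∈ Ioo u v, HasDerivAt Φ (Φ' x) x) :
    ‖∫ x in u..v, exp (Φ x * I) * Φ' x‖ ≤ 2 := by
  have hexp : ContinuousOn (fun x => exp (Φ x * I)) (Icc u v) := by fun_prop
  have hprim : ∫ x in u..v, exp (Φ x * I) * Φ' x = (exp (Φ v * I) - exp (Φ u * I)) * -I := by
    rw [integral_eq_sub_of_hasDeriv_right_of_le huv (f := fun x => exp (Φ x * I) * -I)
      (hexp.mul continuousOn_const)]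
    · ring
    · intro x hx
      convert (((hderiv x hx).ofReal_comp.mul_const I).cexp.mul_const (-I)).hasDerivWithinAt
        using 1
      ring_nf; rw [I_sq]; ring
    · exact (hexp.mul (continuous_ofReal.comp_continuousOn hΦ')).intervalIntegrable_of_Icc huv
  rw [hprim, norm_mul, norm_neg, norm_I, mul_one]
  calc _ ≤ ‖exp (Φ v * I)‖ + ‖exp (Φ u * I)‖ := norm_sub_le _ _
    _ = 2 := by rw [norm_exp_ofReal_mul_I, norm_exp_ofReal_mul_I]; norm_num

theorem norm_integral_exp_mul_I_le_of_deriv {Φ : ℝ → ℝ} {a b m : ℝ} (hab : a ≤ b) (hm : 0 < m)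
    (hΦ : ContDiffOn ℝ 1 Φ (Icc a b)) (hge : ∀ x ∈ Icc a b, m ≤ derivWithin Φ (Icc a b) x)
    (hmono : MonotoneOn (derivWithin Φ (Icc a b)) (Icc a b) ∨
      AntitoneOn (derivWithin Φ (Icc a b)) (Icc a b)) :
    ‖∫ x in a..b, exp (Φ x * I)‖ ≤ 2 / m := by
  rcases hab.eq_or_lt with rfl | hlt
  · simp only [integral_same, norm_zero]; positivity
  set Φ' := derivWithin Φ (Icc a b)
  have hΦc := hΦ.continuousOn
  have hΦ' : ContinuousOn Φ' (Icc a b) := hΦ.continuousOn_derivWithin (uniqueDiffOn_Icc hlt) le_rfl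
  have hpos : ∀ x ∈ Icc a b, 0 < Φ' x := fun x hx => hm.trans_le (hge x hx)
  obtain ⟨f, hf, hf_eq⟩ := (show ContinuousOn (fun x => exp (Φ x * I) * Φ' x) (Icc a b) by
    fun_prop).exists_continuous_eqOn_Icc hab
  obtain ⟨w, hw, hw_eq⟩ := (show ContinuousOn (fun x => (Φ' x)⁻¹) (Icc a b) from
    hΦ'.inv₀ fun x hx => (hpos x hx).ne').exists_continuous_eqOn_Icc hab
  have hB : ∀ u v, a ≤ u → u ≤ v → v ≤ b → ‖∫ x in u..v, f x‖ ≤ 2 := by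
    intro u v hau huv hvb
    have hsub : Icc u v ⊆ Icc a b := Icc_subset_Icc hau hvb
    rw [integral_congr (hf_eq.mono ((uIcc_of_le huv).trans_subset hsub))]
    exact norm_integral_exp_mul_I_mul_deriv_le huv (hΦc.mono hsub) (hΦ'.mono hsub)
      fun x hx => hasDerivAt_derivWithin_Icc (hΦ.differentiableOn one_ne_zero)
        ⟨hau.trans_lt hx.1, hx.2.trans_le hvb⟩
  have hw_mono : MonotoneOn w (Icc a b) ∨ AntitoneOn w (Icc a b) := by
    refine hmono.symm.imp (fun h x hx y hy hxy => ?_) (fun h x hx y hy hxy => ?_) <;>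
      rw [hw_eq hx, hw_eq hy]
    · exact inv_anti₀ (hpos y hy) (h hx hy hxy)
    · exact inv_anti₀ (hpos x hx) (h hx hy hxy)
  have hwf : EqOn (fun x => w x • f x) (fun x => exp (Φ x * I)) (uIcc a b) := fun x hx => by
    rw [uIcc_of_le hab] at hx
    simp only [hw_eq hx, hf_eq hx, real_smul, ofReal_inv]
    rw [mul_left_comm, inv_mul_cancel₀ (ofReal_ne_zero.2 (hpos x hx).ne'), mul_one]
  calc ‖∫ x in a..b, exp (Φ x * I)‖ = ‖∫ x in a..b, w x • f x‖ := by rw [integral_congr hwf]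
    _ ≤ m⁻¹ * 2 := norm_integral_smul_le_of_monotoneOn hab hf hw
        (fun x hx => (hw_eq hx).symm ▸ inv_nonneg.2 (hpos x hx).le)
        (fun x hx => (hw_eq hx).symm ▸ inv_anti₀ hm (hge x hx)) hw_mono hB
    _ = 2 / m := by ring

section

open OrderDual

variable {α β : Type*} [ConditionallyCompleteLinearOrder α] [TopologicalSpace α] [OrderTopology α]
  [LinearOrder β] [TopologicalSpace β] [OrderClosedTopology β]

lemma MonotoneOn.exists_sublevel_split {g : α → β} {a b : α} (hab : a ≤ b)
    (hg : ContinuousOn g (Icc a b)) (hmono : MonotoneOn g (Icc a b)) (c : β) :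
    ∃ p ∈ Icc a b, (p = a ∨ g p ≤ c) ∧ ∀ x ∈ Ioc p b, c < g x := by
  by_cases ha : c < g a
  · exact ⟨a, left_mem_Icc.2 hab, Or.inl rfl,
      fun x hx => ha.trans_le (hmono (left_mem_Icc.2 hab) (Ioc_subset_Icc_self hx) hx.1.le)⟩
  set S := Icc a b ∩ g ⁻¹' Iic c
  have hbdd : BddAbove S := bddAbove_Icc.mono inter_subset_left
  have hmem : sSup S ∈ S := (hg.preimage_isClosed_of_isClosed isClosed_Icc isClosed_Iic).csSup_mem
    ⟨a, left_mem_Icc.2 hab, not_lt.1 ha⟩ hbdd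
  exact ⟨sSup S, hmem.1, Or.inr hmem.2, fun x hx => not_le.1 fun hxc =>
    hx.1.not_ge (le_csSup hbdd ⟨⟨hmem.1.1.trans hx.1.le, hx.2⟩, hxc⟩)⟩

lemma MonotoneOn.exists_superlevel_split {g : α → β} {a b : α} (hab : a ≤ b)
    (hg : ContinuousOn g (Icc a b)) (hmono : MonotoneOn g (Icc a b)) (c : β) :
    ∃ q ∈ Icc a b, (q = b ∨ c ≤ g q) ∧ ∀ x ∈ Ico a q, g x < c := by
  obtain ⟨q, hq, hqb, hlt⟩ := MonotoneOn.exists_sublevel_split (g := toDual ∘ g ∘ ofDual)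
    (a := toDual b) (b := toDual a) hab (by rw [Icc_toDual]; exact hg)
    (by rw [Icc_toDual]; exact hmono.dual) (toDual c)
  exact ⟨ofDual q, ⟨hq.2, hq.1⟩, hqb, fun x hx => hlt (toDual x) ⟨hx.2, hx.1⟩⟩

end

lemma exists_short_interval_of_le_slope {g : ℝ → ℝ} {a b μ δ : ℝ} (hab : a ≤ b) (hμ : 0 < μ)
    (hδ : 0 < δ) (hg : ContinuousOn g (Icc a b))
    (hslope : ∀ x ∈ Icc a b, ∀ y ∈ Icc a b, x ≤ y → μ * (y - x) ≤ g y - g x) :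
    ∃ p q, a ≤ p ∧ p ≤ q ∧ q ≤ b ∧ q - p ≤ 2 * δ / μ ∧
      (p = a ∨ ∀ x ∈ Icc a p, g x ≤ -δ) ∧ (q = b ∨ ∀ x ∈ Icc q b, δ ≤ g x) := by
  have hmono := monotoneOn_of_mul_sub_le_sub hμ.le hslope
  obtain ⟨p, hp, hpa, hp_gt⟩ := hmono.exists_sublevel_split hab hg (-δ)
  obtain ⟨q, hq, hqb, hq_lt⟩ := hmono.exists_superlevel_split hab hg δ
  have hpq : p ≤ q := by
    by_contra! hqp
    rcases hqb with rfl | hqb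
    · exact hqp.not_ge hp.2
    rcases hpa with rfl | hpa
    · exact hqp.not_ge hq.1
    linarith [hmono hq hp hqp.le]
  refine ⟨p, q, hp.1, hpq, hq.2, ?_,
    hpa.imp_right fun h x hx => (hmono ⟨hx.1, hx.2.trans hp.2⟩ hp hx.2).trans h,
    hqb.imp_right fun h x hx => h.trans (hmono hq ⟨hq.1.trans hx.1, hx.2⟩ hx.1)⟩
  have hshort : ∀ x y, p < x → x ≤ y → y < q → μ * (y - x) < 2 * δ := fun x y hpx hxy hyq => by
    have hx : x ∈ Icc a b := ⟨hp.1.trans hpx.le, (hxy.trans hyq.le).trans hq.2⟩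
    have hy : y ∈ Icc a b := ⟨hx.1.trans hxy, hyq.le.trans hq.2⟩
    linarith [hslope x hx y hy hxy, hp_gt x ⟨hpx, hx.2⟩, hq_lt y ⟨hy.1, hyq⟩]
  by_contra! hlong
  set L := 2 * δ / μ
  have hL : μ * L = 2 * δ := mul_div_cancel₀ _ hμ.ne'
  have hL0 : 0 ≤ L := by positivity
  -- `hshort` on `[p + ε, q - ε]` with `ε = (q - p - L) / 4` contradicts `L < q - p`.
  have := hshort (p + (q - p - L) / 4) (q - (q - p - L) / 4) (by linarith) (by linarith)
    (by linarith)
  nlinarith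

lemma norm_integral_exp_neg_mul_I (Φ : ℝ → ℝ) (a b : ℝ) :
    ‖∫ x in a..b, exp (↑(-Φ x) * I)‖ = ‖∫ x in a..b, exp (Φ x * I)‖ := by
  have hconj : ∀ x, exp (↑(-Φ x) * I) = conj (exp (Φ x * I)) := fun x => by
    rw [← exp_conj, map_mul, conj_ofReal, conj_I, ofReal_neg, neg_mul, mul_neg]
  simp only [hconj, intervalIntegral, integral_conj, ← map_sub, RCLike.norm_conj]

def VanDerCorputBound (k : ℕ) (C : ℝ) : Prop :=
  ∀ ⦃a b : ℝ⦄ ⦃Φ : ℝ → ℝ⦄ ⦃μ : ℝ⦄, a ≤ b → 0 < μ → ContDiffOn ℝ k Φ (Icc a b) →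
    (∀ x ∈ Icc a b, μ ≤ iteratedDerivWithin k Φ (Icc a b) x) →
    (k = 1 → MonotoneOn (derivWithin Φ (Icc a b)) (Icc a b) ∨
      AntitoneOn (derivWithin Φ (Icc a b)) (Icc a b)) →
    ‖∫ x in a..b, exp (Φ x * I)‖ ≤ C * μ ^ (-(1 : ℝ) / k)

theorem VanDerCorputBound.norm_integral_le_of_subinterval {k : ℕ} {C : ℝ}
    (hC : VanDerCorputBound k C) (hC0 : 0 ≤ C) {Φ : ℝ → ℝ} {a b u v μ : ℝ}
    (hau : a ≤ u) (huv : u ≤ v) (hvb : v ≤ b) (hμ : 0 < μ) (hΦ : ContDiffOn ℝ k Φ (Icc a b))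
    (hge : ∀ x ∈ Icc u v, μ ≤ iteratedDerivWithin k Φ (Icc a b) x)
    (hmono : k = 1 → MonotoneOn (iteratedDerivWithin k Φ (Icc a b)) (Icc u v) ∨
      AntitoneOn (iteratedDerivWithin k Φ (Icc a b)) (Icc u v)) :
    ‖∫ x in u..v, exp (Φ x * I)‖ ≤ C * μ ^ (-(1 : ℝ) / k) := by
  rcases huv.eq_or_lt with rfl | huv'
  · simp only [integral_same, norm_zero]; positivity
  have heq := iteratedDerivWithin_Icc_eqOn hΦ hau huv' hvb
  refine hC huv hμ (hΦ.mono (Icc_subset_Icc hau hvb)) (fun x hx => heq hx ▸ hge x hx) ?_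
  rintro rfl
  rw [← iteratedDerivWithin_one]
  exact (hmono rfl).imp (·.congr heq.symm) (·.congr heq.symm)

theorem vanDerCorputBound_one : VanDerCorputBound 1 2 := by
  intro a b Φ μ hab hμ hΦ hge hmono
  rw [iteratedDerivWithin_one] at hge
  rw [Nat.cast_one, div_one, Real.rpow_neg_one, ← div_eq_mul_inv]
  exact norm_integral_exp_mul_I_le_of_deriv hab hμ hΦ hge (hmono rfl)

lemma rpow_div_add_one_rpow_neg_one_div {μ : ℝ} (hμ : 0 < μ) {k : ℕ} (hk : 1 ≤ k) :
    (μ ^ ((k : ℝ) / (k + 1))) ^ (-(1 : ℝ) / k) = μ ^ (-(1 : ℝ) / ↑(k + 1)) := by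
  rw [← Real.rpow_mul hμ.le]; congr 1; push_cast; field_simp

lemma rpow_div_add_one_div_self {μ : ℝ} (hμ : 0 < μ) (k : ℕ) :
    μ ^ ((k : ℝ) / (k + 1)) / μ = μ ^ (-(1 : ℝ) / ↑(k + 1)) := by
  rw [← Real.rpow_sub_one hμ.ne']; congr 1; push_cast; field_simp; ring

theorem VanDerCorputBound.succ {k : ℕ} {C : ℝ} (hk : 1 ≤ k) (hC : VanDerCorputBound k C)
    (hC0 : 0 ≤ C) : VanDerCorputBound (k + 1) (2 * C + 2) := by
  intro a b Φ μ hab hμ hΦ hge _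
  rcases hab.eq_or_lt with rfl | hlt
  · simp only [integral_same, norm_zero]; positivity
  set g := iteratedDerivWithin k Φ (Icc a b)
  have hΦk : ContDiffOn ℝ k Φ (Icc a b) := hΦ.of_le (by exact_mod_cast k.le_succ)
  have hg : DifferentiableOn ℝ g (Icc a b) :=
    hΦ.differentiableOn_iteratedDerivWithin (by exact_mod_cast k.lt_succ_self)
      (uniqueDiffOn_Icc hlt)
  have hslope := mul_sub_le_sub_of_le_derivWithin hg fun x hx => by
    rw [← iteratedDerivWithin_succ]; exact hge x hx
  have hgmono := monotoneOn_of_mul_sub_le_sub hμ.le hslope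
  set δ := μ ^ ((k : ℝ) / (k + 1))
  have hδ : 0 < δ := by positivity
  obtain ⟨p, q, hap, hpq, hqb, hlen, hp, hq⟩ :=
    exists_short_interval_of_le_slope hlt.le hμ hδ hg.continuousOn hslope
  have hleft : ‖∫ x in a..p, exp (Φ x * I)‖ ≤ C * δ ^ (-(1 : ℝ) / k) := by
    rcases hp with rfl | hp
    · simp only [integral_same, norm_zero]; positivity
    have hsub : Icc a p ⊆ Icc a b := Icc_subset_Icc le_rfl (hpq.trans hqb)
    rw [← norm_integral_exp_neg_mul_I]
    refine hC.norm_integral_le_of_subinterval hC0 le_rfl hap (hpq.trans hqb) hδ hΦk.neg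
      (fun x hx => ?_) fun _ => Or.inr fun x hx y hy hxy => ?_
    · rw [iteratedDerivWithin_fun_neg]; linarith [hp x hx]
    · simp only [iteratedDerivWithin_fun_neg, neg_le_neg_iff]
      exact hgmono (hsub hx) (hsub hy) hxy
  have hright : ‖∫ x in q..b, exp (Φ x * I)‖ ≤ C * δ ^ (-(1 : ℝ) / k) := by
    rcases hq with rfl | hq
    · simp only [integral_same, norm_zero]; positivity
    exact hC.norm_integral_le_of_subinterval hC0 (hap.trans hpq) hqb le_rfl hδ hΦk hq
      fun _ => Or.inl (hgmono.mono (Icc_subset_Icc (hap.trans hpq) le_rfl))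
  have hmid : ‖∫ x in p..q, exp (Φ x * I)‖ ≤ 2 * δ / μ := by
    refine (norm_integral_le_of_norm_le_const fun x _ => (norm_exp_ofReal_mul_I (Φ x)).le).trans ?_
    rwa [one_mul, abs_of_nonneg (sub_nonneg.2 hpq)]
  calc ‖∫ x in a..b, exp (Φ x * I)‖
      ≤ ‖∫ x in a..p, exp (Φ x * I)‖ + ‖∫ x in p..q, exp (Φ x * I)‖
        + ‖∫ x in q..b, exp (Φ x * I)‖ := norm_integral_le_add_add hap hpq hqb
          ((continuous_exp.comp_continuousOn ((continuous_ofReal.comp_continuousOn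
            hΦ.continuousOn).mul continuousOn_const)).intervalIntegrable_of_Icc hlt.le)
    _ ≤ C * δ ^ (-(1 : ℝ) / k) + 2 * (δ / μ) + C * δ ^ (-(1 : ℝ) / k) := by
        rw [← mul_div_assoc]; exact add_le_add_three hleft hmid hright
    _ = (2 * C + 2) * μ ^ (-(1 : ℝ) / ↑(k + 1)) := by
        rw [rpow_div_add_one_rpow_neg_one_div hμ hk, rpow_div_add_one_div_self hμ]; ring

theorem vanDerCorputBound_two_pow_sub_two {k : ℕ} (hk : 1 ≤ k) :
    VanDerCorputBound k (2 ^ (k + 1) - 2) := by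
  induction k, hk using Nat.le_induction with
  | base => norm_num [vanDerCorputBound_one]
  | succ k hk ih =>
    have hC0 : (0 : ℝ) ≤ 2 ^ (k + 1) - 2 := by
      linarith [pow_le_pow_right₀ (by norm_num : (1 : ℝ) ≤ 2) (by omega : 1 ≤ k + 1)]
    convert ih.succ hk hC0 using 1
    ring

theorem norm_integral_mul_le_of_norm_primitive_le {f Ψ : ℝ → ℂ} {a b M : ℝ} (hab : a ≤ b)
    (hf : ContinuousOn f (Icc a b)) (hΨ : ContDiffOn ℝ 1 Ψ (Icc a b))
    (hM : ∀ x ∈ Icc a b, ‖∫ y in a..x, f y‖ ≤ M) :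
    ‖∫ y in a..b, f y * Ψ y‖ ≤ M * (‖Ψ b‖ + ∫ y in a..b, ‖derivWithin Ψ (Icc a b) y‖) := by
  rcases hab.eq_or_lt with rfl | hlt
  · simp only [integral_same, norm_zero, add_zero]
    exact mul_nonneg ((norm_nonneg _).trans (hM a ⟨le_rfl, le_rfl⟩)) (norm_nonneg _)
  set F := fun x => ∫ y in a..x, f y
  set Ψ' := derivWithin Ψ (Icc a b)
  have hF : ContinuousOn F (Icc a b) := by
    have := continuousOn_primitive_interval (μ := volume) (f := f) (a := a) (b := b)
      (by rw [uIcc_of_le hab]; exact hf.integrableOn_Icc)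
    rwa [uIcc_of_le hab] at this
  have hΨ' : ContinuousOn Ψ' (Icc a b) := hΨ.continuousOn_derivWithin (uniqueDiffOn_Icc hlt) le_rfl
  have hparts : ∫ y in a..b, F y * Ψ' y = F b * Ψ b - ∫ y in a..b, f y * Ψ y := by
    rw [integral_mul_deriv_eq_deriv_mul_of_hasDerivAt (u' := f) (uIcc_of_le hab ▸ hF)
      (uIcc_of_le hab ▸ hΨ.continuousOn) (fun x hx => ?_) (fun x hx => ?_)
      (hf.intervalIntegrable_of_Icc hab) (hΨ'.intervalIntegrable_of_Icc hab)]
    · simp [F]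
    all_goals rw [min_eq_left hab, max_eq_right hab] at hx
    · exact integral_hasDerivAt_right
        ((hf.mono (Icc_subset_Icc le_rfl hx.2.le)).intervalIntegrable_of_Icc hx.1.le)
        ((hf.mono Ioo_subset_Icc_self).stronglyMeasurableAtFilter isOpen_Ioo x hx)
        (hf.continuousAt (Icc_mem_nhds hx.1 hx.2))
    · exact hasDerivAt_derivWithin_Icc (hΨ.differentiableOn one_ne_zero) hx
  calc ‖∫ y in a..b, f y * Ψ y‖ = ‖F b * Ψ b - ∫ y in a..b, F y * Ψ' y‖ := by
        rw [hparts, sub_sub_cancel]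
    _ ≤ ‖F b‖ * ‖Ψ b‖ + ∫ y in a..b, ‖F y‖ * ‖Ψ' y‖ := by
        refine (norm_sub_le _ _).trans ?_
        rw [norm_mul]
        gcongr
        simpa only [norm_mul] using
          intervalIntegral.norm_integral_le_integral_norm (f := fun y => F y * Ψ' y) hab
    _ ≤ M * ‖Ψ b‖ + ∫ y in a..b, M * ‖Ψ' y‖ := by
        gcongr
        · exact hM b ⟨hab, le_rfl⟩
        · exact integral_mono_on hab ((hF.norm.mul hΨ'.norm).intervalIntegrable_of_Icc hab)
            ((continuousOn_const.mul hΨ'.norm).intervalIntegrable_of_Icc hab)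
            fun y hy => mul_le_mul_of_nonneg_right (hM y hy) (norm_nonneg _)
    _ = M * (‖Ψ b‖ + ∫ y in a..b, ‖Ψ' y‖) := by
        rw [intervalIntegral.integral_const_mul, mul_add]

/-- van der Corput lemma with amplitude: if `Φ ∈ C^k[a,b]` is real
with `Φ^{(k)} ≥ μ > 0` (and `Φ'` monotonic when `k = 1`) and `Ψ ∈ C¹[a,b]`, then
`|∫_a^b e^{iλΦ} Ψ| ≤ C_k (λμ)^{-1/k} (|Ψ(b)| + ∫_a^b |Ψ'|)` with `C_k`
depending only on `k`. -/
theorem statement9 (k : ℕ) (hk : 1 ≤ k) :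
    ∃ C : ℝ, 0 < C ∧
      ∀ (a b : ℝ), a ≤ b → ∀ (Φ : ℝ → ℝ) (Ψ : ℝ → ℂ) (μ lam : ℝ), 0 < μ → 0 < lam →
        ContDiffOn ℝ k Φ (Icc a b) →
        ContDiffOn ℝ 1 Ψ (Icc a b) →
        (∀ x ∈ Icc a b, μ ≤ iteratedDerivWithin k Φ (Icc a b) x) →
        (k = 1 → (MonotoneOn (derivWithin Φ (Icc a b)) (Icc a b) ∨
                   AntitoneOn (derivWithin Φ (Icc a b)) (Icc a b))) →
        ‖∫ y in a..b, Complex.exp (Complex.I * lam * Φ y) * Ψ y‖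
          ≤ C * (lam * μ) ^ (-(1 : ℝ) / k) *
            (‖Ψ b‖ + ∫ y in a..b, ‖derivWithin Ψ (Icc a b) y‖) := by
  have hC : (0 : ℝ) < 2 ^ (k + 1) - 2 := by
    linarith [pow_lt_pow_right₀ (by norm_num : (1 : ℝ) < 2) (by omega : 1 < k + 1)]
  refine ⟨2 ^ (k + 1) - 2, hC, fun a b hab Φ Ψ μ lam hμ hlam hΦ hΨ hge hmono => ?_⟩
  have hphase : ∀ y, I * lam * Φ y = ↑(lam * Φ y) * I := fun y => by push_cast; ring
  simp_rw [hphase]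
  refine norm_integral_mul_le_of_norm_primitive_le hab
    (by have := hΦ.continuousOn; fun_prop) hΨ fun x hx => ?_
  refine (vanDerCorputBound_two_pow_sub_two hk).norm_integral_le_of_subinterval hC.le le_rfl
    hx.1 hx.2 (mul_pos hlam hμ) (contDiffOn_const.mul hΦ) (fun y hy => ?_) fun hk1 => ?_
  · rw [iteratedDerivWithin_const_mul_field]
    exact mul_le_mul_of_nonneg_left (hge y ⟨hy.1, hy.2.trans hx.2⟩) hlam.le
  · subst hk1
    have hsub : Icc a x ⊆ Icc a b := Icc_subset_Icc le_rfl hx.2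
    refine (hmono rfl).imp (fun h y hy z hz hyz => ?_) (fun h y hy z hz hyz => ?_) <;>
      simp only [iteratedDerivWithin_const_mul_field, iteratedDerivWithin_one] <;>
      exact mul_le_mul_of_nonneg_left (h (hsub hy) (hsub hz) hyz) hlam.le
end

section
/- (Sublevel set estimate; Christ.) Let N be a positive integer and let f ∈ C^N[a,b] be real-valued with f^{(N)}(x) ≥ μ > 0 for all x ∈ [a,b]. Then there is a constant A_N depending only on N such that for every γ > 0, the Lebesgue measure of the set {x ∈ [a,b] : |f(x)| ≤ γ} is at most A_N (γ/μ)^{1/N}. -/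
/-!
If the sublevel set `E = {x ∈ [a,b] : |f x| ≤ γ}` had measure larger than `N δ`, a greedy choice
would give `N + 1` points of `E` with consecutive gaps at least `δ`. The divided difference of `f`
at these points equals `f^{(N)}(ξ) / N!` for some `ξ` (Rolle's theorem applied `N` times to `f`
minus its Lagrange interpolant), so it is at least `μ / N!`, while its explicit formula bounds it
by `(N + 1) γ / δ^N`. Hence `δ^N ≤ (N + 1)! γ / μ`, and `|E| ≤ N ((N + 1)! γ / μ)^{1/N}`.
-/

open MeasureTheory Set Polynomial Finset
open scoped Nat

section Polynomial

variable {𝕜 : Type*} [NontriviallyNormedField 𝕜]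

theorem Polynomial.contDiff_eval (p : 𝕜[X]) (n : WithTop ℕ∞) :
    ContDiff 𝕜 n fun x => p.eval x := by
  simpa using p.contDiff_aeval (𝕜 := 𝕜) n

theorem Polynomial.iterate_deriv_eval (p : 𝕜[X]) (n : ℕ) :
    deriv^[n] (fun x => p.eval x) = fun x => (derivative^[n] p).eval x := by
  induction n generalizing p with
  | zero => rfl
  | succ n ih =>
    have hderiv : _root_.deriv (fun x => p.eval x) = fun x => p.derivative.eval x := by
      ext x; exact Polynomial.deriv p
    rw [Function.iterate_succ_apply, Function.iterate_succ_apply, ← ih, hderiv]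

theorem Polynomial.iterate_derivative_eq_C_of_natDegree_le {R : Type*} [Semiring R] {p : R[X]}
    {n : ℕ} (h : p.natDegree ≤ n) : derivative^[n] p = C (n ! * p.coeff n) := by
  have hd : (derivative^[n] p).natDegree ≤ 0 := by
    have := p.natDegree_iterate_derivative n
    omega
  rw [eq_C_of_natDegree_le_zero hd, coeff_iterate_derivative, zero_add, Nat.descFactorial_self,
    nsmul_eq_mul]

theorem Polynomial.iteratedDerivWithin_eval_of_natDegree_le {s : Set 𝕜} (hs : UniqueDiffOn 𝕜 s)
    {x : 𝕜} (hx : x ∈ s) {p : 𝕜[X]} {n : ℕ} (h : p.natDegree ≤ n) :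
    iteratedDerivWithin n (fun t => p.eval t) s x = n ! * p.coeff n := by
  rw [iteratedDerivWithin_eq_iteratedDeriv hs (p.contDiff_eval n).contDiffAt hx,
    iteratedDeriv_eq_iterate, iterate_deriv_eval, iterate_derivative_eq_C_of_natDegree_le h]
  exact eval_C

end Polynomial

section DividedDifference

variable {F ι : Type*} [Field F] [Fintype ι] [DecidableEq ι]

def dividedDiff (x r : ι → F) : F :=
  ∑ j, r j * ∏ i ∈ univ.erase j, (x j - x i)⁻¹

theorem Lagrange.coeff_interpolate_eq_dividedDiff (x r : ι → F) :
    (Lagrange.interpolate univ x r).coeff (Fintype.card ι - 1) = dividedDiff x r := by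
  rw [Lagrange.interpolate_apply, finsetSum_coeff]
  refine sum_congr rfl fun j _ => ?_
  have hdeg : (Lagrange.nodal (univ.erase j) x).natDegree = Fintype.card ι - 1 := by
    rw [Lagrange.natDegree_nodal, card_erase_of_mem (mem_univ j), card_univ]
  rw [Lagrange.basis_eq_prod_sub_inv_mul_nodal_div (mem_univ j),
    ← Lagrange.nodal_erase_eq_nodal_div (mem_univ j), ← mul_assoc, ← C_mul, coeff_C_mul, ← hdeg,
    Lagrange.nodal_monic.coeff_natDegree, mul_one, Lagrange.nodalWeight]

theorem Lagrange.natDegree_interpolate_le {x : ι → F} (hx : Function.Injective x) (r : ι → F) :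
    (Lagrange.interpolate univ x r).natDegree ≤ Fintype.card ι - 1 := by
  have hdeg := Lagrange.degree_interpolate_lt (s := univ) r hx.injOn
  rw [card_univ] at hdeg
  exact natDegree_le_iff_coeff_eq_zero.2 fun m hm =>
    (degree_lt_iff_coeff_zero _ _).1 hdeg m (by omega)

theorem abs_dividedDiff_le {x r : ι → ℝ} {γ δ : ℝ}
    (hδ : 0 < δ) (hr : ∀ i, |r i| ≤ γ) (hx : ∀ i j, i ≠ j → δ ≤ |x i - x j|) :
    |dividedDiff x r| ≤ Fintype.card ι * γ / δ ^ (Fintype.card ι - 1) := by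
  have hterm :
      ∀ j, |r j * ∏ i ∈ univ.erase j, (x j - x i)⁻¹| ≤ γ / δ ^ (Fintype.card ι - 1) := by
    intro j
    have hprod : ∏ i ∈ univ.erase j, |(x j - x i)⁻¹| ≤ ∏ _i ∈ univ.erase j, δ⁻¹ :=
      prod_le_prod (fun _ _ => abs_nonneg _) fun i hi => by
        rw [abs_inv]
        exact inv_anti₀ hδ (hx j i (ne_of_mem_erase hi).symm)
    rw [prod_const, card_erase_of_mem (mem_univ j), card_univ, inv_pow] at hprod
    rw [abs_mul, abs_prod, div_eq_mul_inv]
    exact mul_le_mul (hr j) hprod (by positivity) ((abs_nonneg _).trans (hr j))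
  calc |dividedDiff x r| ≤ ∑ j, |r j * ∏ i ∈ univ.erase j, (x j - x i)⁻¹| :=
        abs_sum_le_sum_abs _ _
    _ ≤ ∑ _j : ι, γ / δ ^ (Fintype.card ι - 1) := sum_le_sum fun j _ => hterm j
    _ = Fintype.card ι * γ / δ ^ (Fintype.card ι - 1) := by
      rw [sum_const, card_univ, nsmul_eq_mul, mul_div_assoc]

end DividedDifference

theorem exists_iteratedDerivWithin_eq_zero_of_strictMono {a b : ℝ} (hab : a < b) {m : ℕ}
    {g : ℝ → ℝ} (hg : ContDiffOn ℝ m g (Icc a b)) {y : Fin (m + 1) → ℝ} (hy : StrictMono y)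
    (hyab : ∀ i, y i ∈ Icc a b) (hgy : ∀ i, g (y i) = 0) :
    ∃ ξ ∈ Icc a b, iteratedDerivWithin m g (Icc a b) ξ = 0 := by
  induction m generalizing g with
  | zero => exact ⟨y 0, hyab 0, by simpa using hgy 0⟩
  | succ m ih =>
    have hrolle : ∀ i : Fin (m + 1), ∃ c ∈ Ioo (y i.castSucc) (y i.succ), deriv g c = 0 :=
      fun i => exists_deriv_eq_zero (hy i.castSucc_lt_succ)
        (hg.continuousOn.mono (Icc_subset_Icc (hyab _).1 (hyab _).2)) ((hgy _).trans (hgy _).symm)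
    choose z hz hgz using hrolle
    have hzab : ∀ i, z i ∈ Ioo a b := fun i =>
      ⟨(hyab _).1.trans_lt (hz i).1, (hz i).2.trans_le (hyab _).2⟩
    have hzmono : StrictMono z := Fin.strictMono_iff_lt_succ.2 fun i => by
      have := (hz i.succ).1
      rw [← Fin.succ_castSucc] at this
      exact (hz i.castSucc).2.trans this
    have hg'z : ∀ i, derivWithin g (Icc a b) (z i) = 0 := fun i => by
      rw [derivWithin_of_mem_nhds (Icc_mem_nhds (hzab i).1 (hzab i).2), hgz]
    obtain ⟨ξ, hξ, hξ0⟩ := ih (hg.derivWithin (uniqueDiffOn_Icc hab) (by norm_cast)) hzmono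
      (fun i => Ioo_subset_Icc_self (hzab i)) hg'z
    exact ⟨ξ, hξ, by rwa [iteratedDerivWithin_succ']⟩

theorem exists_iteratedDerivWithin_eq_factorial_mul_dividedDiff {a b : ℝ} (hab : a < b) {N : ℕ}
    {f : ℝ → ℝ} (hf : ContDiffOn ℝ N f (Icc a b)) {x : Fin (N + 1) → ℝ} (hx : StrictMono x)
    (hxab : ∀ i, x i ∈ Icc a b) :
    ∃ ξ ∈ Icc a b, iteratedDerivWithin N f (Icc a b) ξ = N ! * dividedDiff x (f ∘ x) := by
  have hs : UniqueDiffOn ℝ (Icc a b) := uniqueDiffOn_Icc hab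
  set p := Lagrange.interpolate univ x (f ∘ x)
  have hp : ContDiffOn ℝ N (fun t => p.eval t) (Icc a b) := (p.contDiff_eval N).contDiffOn
  have hpdeg : p.natDegree ≤ N := by
    have := Lagrange.natDegree_interpolate_le hx.injective (f ∘ x)
    rwa [Fintype.card_fin, Nat.add_sub_cancel] at this
  obtain ⟨ξ, hξ, hξ0⟩ := exists_iteratedDerivWithin_eq_zero_of_strictMono hab
    (g := f - fun t => p.eval t) (hf.sub hp) hx hxab
    fun i => sub_eq_zero.2
      (Lagrange.eval_interpolate_at_node (f ∘ x) hx.injective.injOn (mem_univ i)).symm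
  refine ⟨ξ, hξ, ?_⟩
  rw [iteratedDerivWithin_sub hξ hs (hf.contDiffWithinAt hξ) (hp.contDiffWithinAt hξ),
    sub_eq_zero, p.iteratedDerivWithin_eval_of_natDegree_le hs hξ hpdeg] at hξ0
  rw [hξ0, ← Lagrange.coeff_interpolate_eq_dividedDiff, Fintype.card_fin, Nat.add_sub_cancel]

theorem Fin.add_le_of_lt_of_forall_castSucc_add_le_succ {α : Type*} [AddCommMonoid α]
    [PartialOrder α] [IsOrderedAddMonoid α] {n : ℕ} {x : Fin (n + 1) → α} {δ : α} (hδ : 0 ≤ δ)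
    (hx : ∀ i : Fin n, x i.castSucc + δ ≤ x i.succ) {i j : Fin (n + 1)} (hij : i < j) :
    x i + δ ≤ x j := by
  have hmono : Monotone x :=
    Fin.monotone_iff_le_succ.2 fun k => (le_add_of_nonneg_right hδ).trans (hx k)
  obtain ⟨k, rfl⟩ := Fin.exists_castSucc_eq.2 (Fin.ne_last_of_lt hij)
  exact (hx k).trans (hmono (Fin.castSucc_lt_iff_succ_le.1 hij))

theorem exists_separated_of_ofReal_mul_lt_volume {E : Set ℝ} (hE : IsClosed E)
    (hEb : BddBelow E) {δ : ℝ} (hδ : 0 ≤ δ) (n : ℕ) (hvol : ENNReal.ofReal (n * δ) < volume E) :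
    ∃ x : Fin (n + 1) → ℝ, (∀ i, x i ∈ E) ∧ ∀ i : Fin n, x i.castSucc + δ ≤ x i.succ := by
  have hne : E.Nonempty := nonempty_of_measure_ne_zero (pos_of_gt hvol).ne'
  induction n generalizing E with
  | zero => exact ⟨fun _ => sInf E, fun _ => hE.csInf_mem hne hEb, Fin.elim0⟩
  | succ n ih =>
    set c := sInf E
    set E' := E ∩ Ici (c + δ)
    have hsplit : volume E ≤ ENNReal.ofReal δ + volume E' := calc
      volume E ≤ volume (Ico c (c + δ) ∪ E') := measure_mono fun y hy => by
          by_cases h : y < c + δ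
          · exact Or.inl ⟨csInf_le hEb hy, h⟩
          · exact Or.inr ⟨hy, not_lt.1 h⟩
      _ ≤ ENNReal.ofReal δ + volume E' := by
          grw [measure_union_le, Real.volume_Ico, add_sub_cancel_left]
    have hvol' : ENNReal.ofReal (n * δ) < volume E' := by
      rw [← ENNReal.add_lt_add_iff_left ENNReal.ofReal_ne_top,
        ← ENNReal.ofReal_add hδ (by positivity)]
      refine lt_of_lt_of_le ?_ hsplit
      convert hvol using 2
      push_cast; ring
    obtain ⟨y, hyE, hy⟩ := ih (hE.inter isClosed_Ici) (hEb.mono inter_subset_left) hvol'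
      (nonempty_of_measure_ne_zero (pos_of_gt hvol').ne')
    refine ⟨Fin.cons c y, Fin.cases (hE.csInf_mem hne hEb) fun i => (hyE i).1, Fin.cases ?_ ?_⟩
    · simpa using (hyE 0).2
    · intro i
      simpa [← Fin.succ_castSucc] using hy i

theorem mul_pow_le_of_separated_sublevel {a b μ γ δ : ℝ} (hab : a < b) {N : ℕ} {f : ℝ → ℝ}
    (hf : ContDiffOn ℝ N f (Icc a b))
    (hder : ∀ x ∈ Icc a b, μ ≤ iteratedDerivWithin N f (Icc a b) x) (hδ : 0 < δ)
    {x : Fin (N + 1) → ℝ} (hxab : ∀ i, x i ∈ Icc a b) (hfx : ∀ i, |f (x i)| ≤ γ)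
    (hsep : ∀ i j, i < j → x i + δ ≤ x j) :
    μ * δ ^ N ≤ (N + 1)! * γ := by
  have hx : StrictMono x := fun i j hij => by linarith [hsep i j hij]
  have hdist : ∀ i j, i ≠ j → δ ≤ |x i - x j| := fun i j hij => by
    rcases hij.lt_or_gt with h | h
    · rw [abs_sub_comm, abs_of_nonneg] <;> linarith [hsep i j h]
    · rw [abs_of_nonneg] <;> linarith [hsep j i h]
  obtain ⟨ξ, hξ, hξeq⟩ := exists_iteratedDerivWithin_eq_factorial_mul_dividedDiff hab hf hx hxab
  have hdd := abs_dividedDiff_le hδ hfx hdist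
  rw [Fintype.card_fin, Nat.add_sub_cancel] at hdd
  have : μ ≤ (N + 1)! * γ / δ ^ N := calc
    μ ≤ N ! * dividedDiff x (f ∘ x) := hξeq ▸ hder ξ hξ
    _ ≤ N ! * ((N + 1 : ℕ) * γ / δ ^ N) :=
        mul_le_mul_of_nonneg_left ((le_abs_self _).trans hdd) (by positivity)
    _ = (N + 1)! * γ / δ ^ N := by push_cast [Nat.factorial_succ]; ring
  rwa [le_div_iff₀ (by positivity)] at this

theorem volume_sublevel_le {N : ℕ} (hN : 1 ≤ N) {a b μ γ : ℝ} {f : ℝ → ℝ}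
    (hf : ContDiffOn ℝ N f (Icc a b)) (hμ : 0 < μ)
    (hder : ∀ x ∈ Icc a b, μ ≤ iteratedDerivWithin N f (Icc a b) x) (hγ : 0 ≤ γ) :
    volume {x ∈ Icc a b | |f x| ≤ γ} ≤
      ENNReal.ofReal (N * ((N + 1)! * γ / μ) ^ ((1 : ℝ) / N)) := by
  set E := {x ∈ Icc a b | |f x| ≤ γ}
  set B := ((N + 1)! * γ / μ) ^ ((1 : ℝ) / N)
  have hB : 0 ≤ B := by positivity
  have hBpow : B ^ N = (N + 1)! * γ / μ := by
    simp only [B, one_div]; exact Real.rpow_inv_natCast_pow (by positivity) (by omega)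
  have hE : IsClosed E := by
    have : E = Icc a b ∩ f ⁻¹' Icc (-γ) γ := by ext; simp [E, abs_le]
    exact this ▸ hf.continuousOn.preimage_isClosed_of_isClosed isClosed_Icc isClosed_Icc
  by_contra! hlt
  obtain ⟨r, -, hBr, hrE⟩ := ENNReal.lt_iff_exists_real_btwn.1 hlt
  have hN0 : (0 : ℝ) < N := by exact_mod_cast hN
  set δ := r / N
  have hBδ : B < δ := by
    rw [lt_div_iff₀ hN0, mul_comm]
    exact (ENNReal.ofReal_lt_ofReal_iff'.1 hBr).1
  have hδ : 0 < δ := hB.trans_lt hBδ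
  obtain ⟨x, hxE, hgap⟩ := exists_separated_of_ofReal_mul_lt_volume hE
    ⟨a, fun y hy => hy.1.1⟩ hδ.le N (by rwa [mul_div_cancel₀ r hN0.ne'])
  have hsep := fun i j (hij : i < j) =>
    Fin.add_le_of_lt_of_forall_castSucc_add_le_succ hδ.le hgap hij
  have hab : a < b := calc
    a ≤ x 0 := (hxE 0).1.1
    _ < x (Fin.last N) := by linarith [hsep 0 (Fin.last N) (by simp [Fin.lt_def]; omega)]
    _ ≤ b := (hxE _).1.2
  have hμδ := mul_pow_le_of_separated_sublevel hab hf hder hδ (fun i => (hxE i).1)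
    (fun i => (hxE i).2) hsep
  have : δ ^ N ≤ B ^ N := by rw [hBpow, le_div_iff₀ hμ]; linarith
  exact (pow_lt_pow_left₀ hBδ hB (by omega)).not_ge this

/-- sublevel set estimate, Christ: if `f ∈ C^N[a,b]` satisfies
`f^{(N)} ≥ μ > 0` on `[a,b]`, then `|{x ∈ [a,b] : |f x| ≤ γ}| ≤ A_N (γ/μ)^{1/N}`
with `A_N` depending only on `N`. -/
theorem statement10 (N : ℕ) (hN : 1 ≤ N) :
    ∃ A : ℝ, 0 < A ∧
      ∀ (a b : ℝ), a ≤ b → ∀ (f : ℝ → ℝ) (μ : ℝ), 0 < μ →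
        ContDiffOn ℝ N f (Icc a b) →
        (∀ x ∈ Icc a b, μ ≤ iteratedDerivWithin N f (Icc a b) x) →
        ∀ γ : ℝ, 0 < γ →
          volume {x ∈ Icc a b | |f x| ≤ γ} ≤ ENNReal.ofReal (A * (γ / μ) ^ ((1 : ℝ) / N)) := by
  refine ⟨N * ((N + 1)! : ℝ) ^ ((1 : ℝ) / N), by positivity, ?_⟩
  intro a b _ f μ hμ hf hder γ hγ
  refine (volume_sublevel_le hN hf hμ hder hγ.le).trans_eq ?_
  rw [mul_div_assoc, Real.mul_rpow (by positivity) (by positivity), mul_assoc]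
end

section
/- (Cotlar–Stein variant.) Let H be a Hilbert space and let (T_i)_{i∈I} be a finite family of bounded linear operators on H such that: (1) T_i T_{i'}* = 0 whenever i ≠ i'; (2) Σ_{i'∈I} ‖T_i* T_{i'}‖ ≤ C for every i ∈ I, with a constant C independent of i. Then ‖Σ_{i∈I} T_i‖ ≤ C^{1/2}. -/
/-!
Let `Pᵢ` be the orthogonal projection onto `(ker Tᵢ)ᗮ`, the closure of `range Tᵢ†`. The hypothesis
`Tᵢ Tⱼ† = 0` puts `range Tⱼ†` inside `ker Tᵢ`, so these subspaces are mutually orthogonal and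
Bessel's inequality gives `∑ ‖Pᵢ x‖² ≤ ‖x‖²`. Since `Tᵢ = Tᵢ Pᵢ`, expanding `‖∑ Tᵢ Pᵢ x‖²` and
bounding `⟪Tᵢ uᵢ, Tⱼ uⱼ⟫` by `‖Tᵢ† Tⱼ‖ ‖uᵢ‖ ‖uⱼ‖` reduces the claim to Schur's test for the
symmetric matrix `(‖Tᵢ† Tⱼ‖)`, whose row sums are at most `C`.
-/

open ContinuousLinearMap
open scoped InnerProduct

theorem Finset.sum_sum_mul_mul_le_mul_sum_sq {ι : Type*} (s : Finset ι) (a : ι → ι → ℝ) (x : ι → ℝ)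
    {C : ℝ} (ha : ∀ i j, 0 ≤ a i j) (hrow : ∀ i ∈ s, ∑ j ∈ s, a i j ≤ C)
    (hcol : ∀ j ∈ s, ∑ i ∈ s, a i j ≤ C) :
    ∑ i ∈ s, ∑ j ∈ s, a i j * (x i * x j) ≤ C * ∑ i ∈ s, x i ^ 2 := by
  have hrow' : ∑ i ∈ s, ∑ j ∈ s, a i j * x i ^ 2 ≤ C * ∑ i ∈ s, x i ^ 2 := by
    rw [Finset.mul_sum]
    refine Finset.sum_le_sum fun i hi => ?_
    rw [← Finset.sum_mul]
    exact mul_le_mul_of_nonneg_right (hrow i hi) (sq_nonneg _)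
  have hcol' : ∑ i ∈ s, ∑ j ∈ s, a i j * x j ^ 2 ≤ C * ∑ i ∈ s, x i ^ 2 := by
    rw [Finset.sum_comm, Finset.mul_sum]
    refine Finset.sum_le_sum fun j hj => ?_
    rw [← Finset.sum_mul]
    exact mul_le_mul_of_nonneg_right (hcol j hj) (sq_nonneg _)
  calc ∑ i ∈ s, ∑ j ∈ s, a i j * (x i * x j)
      ≤ ∑ i ∈ s, ∑ j ∈ s, (a i j * x i ^ 2 + a i j * x j ^ 2) / 2 := by
        gcongr with i _ j _
        nlinarith [mul_nonneg (ha i j) (sq_nonneg (x i - x j))]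
    _ = (∑ i ∈ s, ∑ j ∈ s, a i j * x i ^ 2 + ∑ i ∈ s, ∑ j ∈ s, a i j * x j ^ 2) / 2 := by
        simp only [add_div, Finset.sum_add_distrib, Finset.sum_div]
    _ ≤ C * ∑ i ∈ s, x i ^ 2 := by linarith

section

variable {𝕜 E F : Type*} [RCLike 𝕜] [NormedAddCommGroup E] [InnerProductSpace 𝕜 E]

theorem norm_sum_sq_le_sum_sum_norm_inner {ι : Type*} (s : Finset ι) (v : ι → E) :
    ‖∑ i ∈ s, v i‖ ^ 2 ≤ ∑ i ∈ s, ∑ j ∈ s, ‖(inner 𝕜 (v i) (v j) : 𝕜)‖ := by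
  rw [← inner_self_eq_norm_sq (𝕜 := 𝕜), sum_inner]
  simp_rw [inner_sum, map_sum]
  exact Finset.sum_le_sum fun i _ => Finset.sum_le_sum fun j _ => RCLike.re_le_norm _

theorem OrthogonalFamily.sum_norm_sq_starProjection_le {ι : Type*} [Fintype ι]
    {V : ι → Submodule 𝕜 E} [∀ i, (V i).HasOrthogonalProjection]
    (hV : OrthogonalFamily 𝕜 (fun i => V i) fun i => (V i).subtypeₗᵢ) (x : E) :
    ∑ i, ‖(V i).starProjection x‖ ^ 2 ≤ ‖x‖ ^ 2 := by
  set s := ∑ i, (V i).starProjection x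
  have hs : ‖s‖ ^ 2 = ∑ i, ‖(V i).starProjection x‖ ^ 2 :=
    hV.norm_sum (fun i => (V i).orthogonalProjectionOnto x) Finset.univ
  have hsx : ‖s‖ ^ 2 = RCLike.re (inner 𝕜 s x) := by
    simp only [hs, s, sum_inner, map_sum, Submodule.re_inner_starProjection_eq_normSq]
    rfl
  have : ‖s‖ ^ 2 ≤ ‖s‖ * ‖x‖ := hsx ▸ re_inner_le_norm s x
  rw [← hs]
  nlinarith [norm_nonneg s, norm_nonneg x]

variable [CompleteSpace E] [NormedAddCommGroup F] [InnerProductSpace 𝕜 F] [CompleteSpace F]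

theorem ContinuousLinearMap.orthogonal_ker_le_ker_of_comp_adjoint_eq_zero {A B : E →L[𝕜] F}
    (h : A ∘L B† = 0) : B.kerᗮ ≤ A.ker := by
  rw [orthogonal_ker]
  refine Submodule.topologicalClosure_minimal _ ?_ A.isClosed_ker
  rintro _ ⟨y, rfl⟩
  simpa using congr($h y)

theorem ContinuousLinearMap.orthogonalFamily_orthogonal_ker {ι : Type*} {T : ι → E →L[𝕜] F}
    (h : ∀ i j, i ≠ j → T i ∘L (T j)† = 0) :
    OrthogonalFamily 𝕜 (fun i => (T i).kerᗮ) fun i => ((T i).kerᗮ).subtypeₗᵢ := by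
  refine OrthogonalFamily.of_pairwise fun i j hij => ?_
  change (T i).kerᗮ ⟂ (T j).kerᗮ
  rw [Submodule.isOrtho_iff_le, Submodule.orthogonal_orthogonal]
  exact orthogonal_ker_le_ker_of_comp_adjoint_eq_zero (h j i hij.symm)

omit [CompleteSpace F] in
theorem ContinuousLinearMap.apply_starProjection_orthogonal_ker (T : E →L[𝕜] F) (x : E) :
    T (T.kerᗮ.starProjection x) = T x := by
  rw [Submodule.starProjection_orthogonal_val, map_sub, sub_eq_self]
  exact T.ker.starProjection_apply_mem x

theorem ContinuousLinearMap.norm_adjoint_comp_comm (A B : E →L[𝕜] F) : ‖B† ∘L A‖ = ‖A† ∘L B‖ := by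
  rw [← adjoint.norm_map (A† ∘L B), adjoint_comp, adjoint_adjoint]

theorem ContinuousLinearMap.norm_sum_apply_sq_le {ι : Type*} (s : Finset ι) (T : ι → E →L[𝕜] F)
    (u : ι → E) :
    ‖∑ i ∈ s, T i (u i)‖ ^ 2 ≤ ∑ i ∈ s, ∑ j ∈ s, ‖(T i)† ∘L T j‖ * (‖u i‖ * ‖u j‖) := by
  refine (norm_sum_sq_le_sum_sum_norm_inner (𝕜 := 𝕜) s _).trans ?_
  gcongr with i _ j _
  calc ‖(inner 𝕜 (T i (u i)) (T j (u j)) : 𝕜)‖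
        = ‖(inner 𝕜 (u i) (((T i)† ∘L T j) (u j)) : 𝕜)‖ := by
        rw [comp_apply, adjoint_inner_right]
    _ ≤ ‖u i‖ * (‖(T i)† ∘L T j‖ * ‖u j‖) := by
        grw [norm_inner_le_norm, le_opNorm]
    _ = ‖(T i)† ∘L T j‖ * (‖u i‖ * ‖u j‖) := by ring

theorem ContinuousLinearMap.norm_sum_apply_sq_le_of_comp_adjoint_eq_zero {ι : Type*} [Fintype ι]
    {T : ι → E →L[𝕜] F} {C : ℝ} (hC : 0 ≤ C) (h1 : ∀ i j, i ≠ j → T i ∘L (T j)† = 0)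
    (h2 : ∀ i, ∑ j, ‖(T i)† ∘L T j‖ ≤ C) (x : E) :
    ‖(∑ i, T i) x‖ ^ 2 ≤ C * ‖x‖ ^ 2 := by
  set u := fun i => (T i).kerᗮ.starProjection x
  have hu : (∑ i, T i) x = ∑ i, T i (u i) := by
    simp only [u, sum_apply, apply_starProjection_orthogonal_ker]
  calc ‖(∑ i, T i) x‖ ^ 2 ≤ ∑ i, ∑ j, ‖(T i)† ∘L T j‖ * (‖u i‖ * ‖u j‖) :=
        hu ▸ norm_sum_apply_sq_le _ T u
    _ ≤ C * ∑ i, ‖u i‖ ^ 2 :=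
        Finset.sum_sum_mul_mul_le_mul_sum_sq _ _ _ (fun _ _ => norm_nonneg _)
          (fun i _ => h2 i) (fun j _ => by simpa only [norm_adjoint_comp_comm] using h2 j)
    _ ≤ C * ‖x‖ ^ 2 := by
        gcongr
        exact (orthogonalFamily_orthogonal_ker h1).sum_norm_sq_starProjection_le x

end

/-- Cotlar–Stein variant: if `(T i)` is a finite family of bounded
operators on a Hilbert space with `T i ∘ (T i')* = 0` for `i ≠ i'` and
`∑ i' ‖(T i)* ∘ T i'‖ ≤ C` for every `i`, then `‖∑ i, T i‖ ≤ C ^ (1/2)`. -/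
theorem statement13 {H : Type*} [NormedAddCommGroup H] [InnerProductSpace ℂ H]
    [CompleteSpace H] {ι : Type*} [Fintype ι] (T : ι → H →L[ℂ] H) (C : ℝ)
    (h1 : ∀ i i' : ι, i ≠ i' → T i ∘L ContinuousLinearMap.adjoint (T i') = 0)
    (h2 : ∀ i : ι, ∑ i' : ι, ‖ContinuousLinearMap.adjoint (T i) ∘L T i'‖ ≤ C) :
    ‖∑ i : ι, T i‖ ≤ Real.sqrt C := by
  rcases isEmpty_or_nonempty ι with _ | ⟨⟨i⟩⟩
  · simp [Real.sqrt_nonneg]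
  have hC : 0 ≤ C := (Finset.sum_nonneg fun _ _ => norm_nonneg _).trans (h2 i)
  refine opNorm_le_bound _ (Real.sqrt_nonneg C) fun x => ?_
  rw [← Real.sqrt_sq (norm_nonneg x), ← Real.sqrt_mul hC]
  exact Real.le_sqrt_of_sq_le (norm_sum_apply_sq_le_of_comp_adjoint_eq_zero hC h1 h2 x)
end
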